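/- arXiv:1610.01979 — 7 statements merged into one kernel-verified Lean document; each statement's English description precedes it below -/
import Mathlib

section
/- Let f : ℝ³ → ℝ be a function of class C³ and let X be a preconnected subset of the critical set {x ∈ ℝ³ | df_x = 0} of f (i.e., for all x ∈ X the Fréchet derivative of f at x is the zero map). Then the restriction of f to X is constant: there exists c ∈ ℝ such that f(x) = c for all x ∈ X. -/
/-!
By Sard's theorem for `C³` maps `ℝ³ → ℝ`, the image under `f` of the critical set is
Lebesgue-null; a preconnected set is mapped onto an interval, which must then be a point.

For Sard: if `x, y` are critical, Taylor's formula gives `|f y - f x| ≤ 2 M ‖y - x‖³` with `M` a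
bound for the third derivative on `[x, y]`, so `f` is Hölder of exponent 3 on the critical set and
`μH¹ (f '' S) ≤ 2 M μH³ S`. Where the second or the third derivative is nonzero, the critical
set lies in the zero set of a `C¹` map with nonzero derivative; such a set has no Lebesgue density
points, hence measure zero. Where both vanish, the third derivative is uniformly small at small
scales, so the Hölder constant can be taken arbitrarily small.
-/

open MeasureTheory Metric Filter Topology Set Module
open scoped NNReal ENNReal

theorem HolderOnWith.of_dist_le {X Y : Type*} [PseudoMetricSpace X] [PseudoMetricSpace Y]
    {C r : ℝ≥0} {f : X → Y} {s : Set X}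
    (h : ∀ x ∈ s, ∀ y ∈ s, dist (f x) (f y) ≤ C * dist x y ^ (r : ℝ)) :
    HolderOnWith C r f s := by
  intro x hx y hy
  rw [edist_dist, edist_dist, ENNReal.ofReal_rpow_of_nonneg dist_nonneg r.coe_nonneg,
    ← ENNReal.ofReal_coe_nnreal, ← ENNReal.ofReal_mul C.coe_nonneg]
  exact ENNReal.ofReal_le_ofReal (h x hx y hy)

theorem hausdorffMeasure_image_le_of_holderOnWith_inter_ball {X Y : Type*} [MetricSpace X]
    [TopologicalSpace.SeparableSpace X] [MeasurableSpace X] [BorelSpace X] [EMetricSpace Y]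
    [MeasurableSpace Y] [BorelSpace Y] {f : X → Y} {s : Set X} (hs : MeasurableSet s)
    {C r : ℝ≥0} (hr : 0 < r) {δ : ℝ} (hδ : 0 < δ)
    (hf : ∀ x, HolderOnWith C r f (s ∩ ball x δ)) {d : ℝ} (hd : 0 ≤ d) :
    μH[d] (f '' s) ≤ (C : ℝ≥0∞) ^ d * μH[r * d] s := by
  rcases isEmpty_or_nonempty X with hX | hX
  · simp [eq_empty_of_isEmpty s]
  obtain ⟨u, hu⟩ := TopologicalSpace.exists_dense_seq X
  set D := disjointed fun n => ball (u n) δ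
  have hcover : ⋃ n, s ∩ D n = s := by
    rw [← inter_iUnion, iUnion_disjointed, inter_eq_left]
    intro x _
    obtain ⟨n, hn⟩ := hu.exists_dist_lt x hδ
    exact mem_iUnion.2 ⟨n, hn⟩
  have hpieces : ∀ n, μH[d] (f '' (s ∩ D n)) ≤ (C : ℝ≥0∞) ^ d * μH[r * d] (s ∩ D n) := fun n =>
    ((hf (u n)).mono (inter_subset_inter_right _ (disjointed_le _ n))).hausdorffMeasure_image_le
      hr hd
  calc μH[d] (f '' s) = μH[d] (⋃ n, f '' (s ∩ D n)) := by rw [← image_iUnion, hcover]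
    _ ≤ ∑' n, (C : ℝ≥0∞) ^ d * μH[r * d] (s ∩ D n) :=
      (measure_iUnion_le _).trans (ENNReal.tsum_le_tsum hpieces)
    _ = (C : ℝ≥0∞) ^ d * μH[r * d] s := by
      rw [ENNReal.tsum_mul_left, ← measure_iUnion _ (fun n => hs.inter (.disjointed (fun n =>
        measurableSet_ball) n)), hcover]
      exact (disjoint_disjointed _).mono fun i j h => h.mono inter_subset_right inter_subset_right

theorem HasFDerivAt.exists_eventually_levelSet_inter_closedBall_eq_empty
    {E F : Type*} [NormedAddCommGroup E] [NormedSpace ℝ E] [NormedAddCommGroup F]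
    [NormedSpace ℝ F] {g : E → F} {L : E →L[ℝ] F} {x : E} (hg : HasFDerivAt g L x)
    (hL : L ≠ 0) :
    ∃ u : E, ‖u‖ < 1 ∧
      ∀ᶠ ρ in 𝓝[>] 0, {y | g y = g x} ∩ closedBall (x + (4 * ρ) • u) ρ = ∅ := by
  have hL₀ : 0 < ‖L‖ := norm_pos_iff.mpr hL
  obtain ⟨u, hu, hLu⟩ := L.exists_lt_apply_of_lt_opNorm (half_lt_self hL₀)
  obtain ⟨ε, hε, hclose⟩ := Metric.eventually_nhds_iff.mp
    (hg.isLittleO.def (by positivity : (0 : ℝ) < ‖L‖ / 5))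
  refine ⟨u, hu, ?_⟩
  -- On the ball `‖L (y - x)‖ > ‖L‖ ρ` and `‖y - x‖ < 5 ρ`, while near `x` the level set
  -- satisfies `‖L (y - x)‖ ≤ ‖L‖ ‖y - x‖ / 5`.
  filter_upwards [Ioo_mem_nhdsGT (by positivity : (0 : ℝ) < ε / 5)] with ρ ⟨hρ, hρε⟩
  refine eq_empty_iff_forall_notMem.mpr fun y ⟨(hy : g y = g x), hyball⟩ => ?_
  obtain ⟨e, he, rfl⟩ : ∃ e, ‖e‖ ≤ ρ ∧ x + (4 * ρ) • u + e = y :=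
    ⟨y - (x + (4 * ρ) • u), mem_closedBall_iff_norm.mp hyball, add_sub_cancel _ _⟩
  have hdiff : x + (4 * ρ) • u + e - x = (4 * ρ) • u + e := by abel
  have hu' : ‖(4 * ρ) • u‖ = 4 * ρ * ‖u‖ := by
    rw [norm_smul, Real.norm_of_nonneg (by positivity)]
  have hdist : ‖(4 * ρ) • u + e‖ < 5 * ρ := by
    nlinarith [norm_add_le ((4 * ρ) • u) e]
  have hsmall : ‖L ((4 * ρ) • u + e)‖ ≤ ‖L‖ * ρ := by
    have := hclose (show dist _ x < ε by rw [dist_eq_norm, hdiff]; linarith)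
    rw [hy, hdiff, sub_self, zero_sub, norm_neg] at this
    nlinarith
  have hlarge : ‖L‖ * ρ < ‖L ((4 * ρ) • u + e)‖ := by
    have h1 := L.le_opNorm e
    have h2 := norm_sub_norm_le (L ((4 * ρ) • u)) (-L e)
    rw [sub_neg_eq_add, norm_neg, ← map_add, map_smul, norm_smul,
      Real.norm_of_nonneg (by positivity)] at h2
    nlinarith
  linarith

theorem addHaar_setOf_eq_zero_and_fderiv_ne_zero {E F : Type*} [NormedAddCommGroup E]
    [NormedSpace ℝ E] [FiniteDimensional ℝ E] [MeasurableSpace E] [BorelSpace E]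
    (μ : Measure E) [μ.IsAddHaarMeasure] [NormedAddCommGroup F] [NormedSpace ℝ F]
    {g : E → F} (hg : ContDiff ℝ 1 g) :
    μ {x | g x = 0 ∧ fderiv ℝ g x ≠ 0} = 0 := by
  set S := {x | g x = 0 ∧ fderiv ℝ g x ≠ 0}
  have hS : MeasurableSet S :=
    (isClosed_eq hg.continuous continuous_const).measurableSet.inter
      (isOpen_ne_fun (hg.continuous_fderiv one_ne_zero) continuous_const).measurableSet
  have hfalse : ∀ᵐ x ∂μ.restrict S, False := by
    filter_upwards [IsUnifLocDoublingMeasure.ae_tendsto_measure_inter_div μ S 4,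
      ae_restrict_mem hS] with x hdensity ⟨hx, hx'⟩
    obtain ⟨u, hu, hempty⟩ := ((hg.differentiable one_ne_zero x).hasFDerivAt
      ).exists_eventually_levelSet_inter_closedBall_eq_empty hx'
    have hcenter : ∀ᶠ ρ in 𝓝[>] (0 : ℝ), x ∈ closedBall (x + (4 * ρ) • u) (4 * id ρ) := by
      filter_upwards [self_mem_nhdsWithin] with ρ (hρ : 0 < ρ)
      rw [mem_closedBall_iff_norm, sub_add_cancel_left, norm_neg, norm_smul,
        Real.norm_of_nonneg (by positivity), id]
      nlinarith [norm_nonneg u]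
    have hzero : Tendsto (fun ρ => μ (S ∩ closedBall (x + (4 * ρ) • u) (id ρ)) /
        μ (closedBall (x + (4 * ρ) • u) (id ρ))) (𝓝[>] 0) (𝓝 0) := by
      refine tendsto_const_nhds.congr' (hempty.mono fun ρ hρ => ?_)
      have : S ∩ closedBall (x + (4 * ρ) • u) ρ = ∅ :=
        subset_empty_iff.mp (hρ ▸ inter_subset_inter_left _ fun y hy => by simp [hy.1, hx])
      simp [this]
    exact zero_ne_one (tendsto_nhds_unique hzero (hdensity _ id tendsto_id hcenter))
  exact Measure.restrict_eq_zero.mp (ae_eq_bot.mp (eventually_false_iff_eq_bot.mp hfalse))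

section Taylor

variable {E F : Type*} [NormedAddCommGroup E] [NormedSpace ℝ E] [NormedAddCommGroup F]
  [NormedSpace ℝ F] {f : E → F} {x y : E} {M : ℝ}

-- Instance search does not find these unaided, and without them the norm of a third
-- derivative `E →L[ℝ] E →L[ℝ] E →L[ℝ] F` does not elaborate.
noncomputable instance : NormedAddCommGroup (E →L[ℝ] E →L[ℝ] F) := inferInstance
noncomputable instance : NormedSpace ℝ (E →L[ℝ] E →L[ℝ] F) := inferInstance

theorem ContDiff.contDiff_fderiv_fderiv (hf : ContDiff ℝ 3 f) :
    ContDiff ℝ 1 (fderiv ℝ (fderiv ℝ f)) :=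
  (hf.fderiv_right (m := 2) (by norm_num)).fderiv_right (by norm_num)

theorem ContDiff.continuous_fderiv_fderiv_fderiv (hf : ContDiff ℝ 3 f) :
    Continuous (fderiv ℝ (fderiv ℝ (fderiv ℝ f))) :=
  hf.contDiff_fderiv_fderiv.continuous_fderiv one_ne_zero

theorem norm_fderiv_le_of_mem_segment_of_fderiv_eq_zero (hf : ContDiff ℝ 3 f)
    (hx : fderiv ℝ f x = 0) (hy : fderiv ℝ f y = 0)
    (hM : ∀ z ∈ segment ℝ x y, ‖fderiv ℝ (fderiv ℝ (fderiv ℝ f)) z‖ ≤ M) :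
    ∀ z ∈ segment ℝ x y, ‖fderiv ℝ f z‖ ≤ 2 * M * ‖y - x‖ ^ 2 := by
  have hxs : x ∈ segment ℝ x y := left_mem_segment ℝ x y
  have hM₀ : 0 ≤ M := (norm_nonneg _).trans (hM x hxs)
  have hd2 : ∀ z, HasFDerivAt (fderiv ℝ f) (fderiv ℝ (fderiv ℝ f) z) z := fun z =>
    ((hf.fderiv_right (m := 2) (by norm_num)).differentiable (by norm_num) z).hasFDerivAt
  have hd3 : ∀ z, HasFDerivAt (fderiv ℝ (fderiv ℝ f)) (fderiv ℝ (fderiv ℝ (fderiv ℝ f)) z) z :=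
    fun z => (hf.contDiff_fderiv_fderiv.differentiable one_ne_zero z).hasFDerivAt
  set L := fderiv ℝ (fderiv ℝ f) x
  have hL : ∀ z ∈ segment ℝ x y, ‖fderiv ℝ (fderiv ℝ f) z - L‖ ≤ M * ‖y - x‖ := fun z hz =>
    ((convex_segment x y).norm_image_sub_le_of_norm_hasFDerivWithin_le
      (fun w _ => (hd3 w).hasFDerivWithinAt) hM hxs hz).trans
      (mul_le_mul_of_nonneg_left (norm_sub_le_of_mem_segment hz) hM₀)
  have hlin : ∀ z ∈ segment ℝ x y, ‖fderiv ℝ f z - L (z - x)‖ ≤ M * ‖y - x‖ * ‖y - x‖ := by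
    intro z hz
    have := (convex_segment x y).norm_image_sub_le_of_norm_hasFDerivWithin_le'
      (fun w _ => (hd2 w).hasFDerivWithinAt) hL hxs hz
    rw [hx, sub_zero] at this
    exact this.trans (by gcongr; exact norm_sub_le_of_mem_segment hz)
  -- at `z = y` the critical point `y` bounds the linear term along the whole segment
  have hLy : ‖L (y - x)‖ ≤ M * ‖y - x‖ * ‖y - x‖ := by
    have := hlin y (right_mem_segment ℝ x y)
    rwa [hy, zero_sub, norm_neg] at this
  intro z hz
  obtain ⟨t, ⟨ht₀, ht₁⟩, rfl⟩ := (segment_eq_image' ℝ x y ▸ hz :)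
  have hLz : ‖L (x + t • (y - x) - x)‖ ≤ M * ‖y - x‖ * ‖y - x‖ := by
    rw [add_sub_cancel_left, map_smul, norm_smul, Real.norm_of_nonneg ht₀]
    exact (mul_le_of_le_one_left (norm_nonneg _) ht₁).trans hLy
  calc ‖fderiv ℝ f (x + t • (y - x))‖
      ≤ ‖fderiv ℝ f (x + t • (y - x)) - L (x + t • (y - x) - x)‖
        + ‖L (x + t • (y - x) - x)‖ := norm_le_norm_sub_add _ _
    _ ≤ 2 * M * ‖y - x‖ ^ 2 := by linarith [hlin _ hz]

theorem norm_sub_le_of_fderiv_eq_zero (hf : ContDiff ℝ 3 f)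
    (hx : fderiv ℝ f x = 0) (hy : fderiv ℝ f y = 0)
    (hM : ∀ z ∈ segment ℝ x y, ‖fderiv ℝ (fderiv ℝ (fderiv ℝ f)) z‖ ≤ M) :
    ‖f y - f x‖ ≤ 2 * M * ‖y - x‖ ^ 3 := by
  have := (convex_segment x y).norm_image_sub_le_of_norm_hasFDerivWithin_le
    (fun z _ => ((hf.differentiable (by norm_num) z).hasFDerivAt.hasFDerivWithinAt))
    (norm_fderiv_le_of_mem_segment_of_fderiv_eq_zero hf hx hy hM)
    (left_mem_segment ℝ x y) (right_mem_segment ℝ x y)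
  linarith

theorem HolderOnWith.of_fderiv_eq_zero (hf : ContDiff ℝ 3 f) {s : Set E}
    (hs : ∀ x ∈ s, fderiv ℝ f x = 0) {M : ℝ≥0}
    (hM : ∀ x ∈ s, ∀ y ∈ s, ∀ z ∈ segment ℝ x y, ‖fderiv ℝ (fderiv ℝ (fderiv ℝ f)) z‖ ≤ M) :
    HolderOnWith (2 * M) 3 f s := by
  refine HolderOnWith.of_dist_le fun x hx y hy => ?_
  rw [dist_eq_norm, dist_eq_norm, NNReal.coe_ofNat, Real.rpow_ofNat]
  push_cast
  exact norm_sub_le_of_fderiv_eq_zero hf (hs y hy) (hs x hx) (hM y hy x hx)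

end Taylor

section Sard

variable {E : Type*} [NormedAddCommGroup E] [NormedSpace ℝ E] [FiniteDimensional ℝ E]
  [MeasurableSpace E] [BorelSpace E] {f : E → ℝ}

theorem hausdorffMeasure_image_nondegenerate_critical_eq_zero (hE : finrank ℝ E = 3)
    (hf : ContDiff ℝ 3 f) (R : ℝ) :
    μH[1] (f '' (closedBall 0 R ∩ {x | fderiv ℝ f x = 0 ∧
      (fderiv ℝ (fderiv ℝ f) x ≠ 0 ∨ fderiv ℝ (fderiv ℝ (fderiv ℝ f)) x ≠ 0)})) = 0 := by
  set S := closedBall 0 R ∩ {x | fderiv ℝ f x = 0 ∧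
      (fderiv ℝ (fderiv ℝ f) x ≠ 0 ∨ fderiv ℝ (fderiv ℝ (fderiv ℝ f)) x ≠ 0)}
  obtain ⟨M, hM⟩ := (isCompact_closedBall (0 : E) R).exists_bound_of_continuousOn
    (f := fderiv ℝ (fderiv ℝ (fderiv ℝ f))) hf.continuous_fderiv_fderiv_fderiv.continuousOn
  have hholder : HolderOnWith (2 * M.toNNReal) 3 f S :=
    HolderOnWith.of_fderiv_eq_zero hf (fun x hx => hx.2.1) fun x hx y hy z hz =>
      (hM z ((convex_closedBall 0 R).segment_subset hx.1 hy.1 hz)).trans M.le_coe_toNNReal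
  have hnull : μH[finrank ℝ E] S = 0 := by
    refine measure_mono_null (fun x ⟨_, hx1, hx23⟩ => ?_) (measure_union_null
      (addHaar_setOf_eq_zero_and_fderiv_ne_zero _ (hf.fderiv_right (m := 1) (by norm_num)))
      (addHaar_setOf_eq_zero_and_fderiv_ne_zero _ hf.contDiff_fderiv_fderiv))
    by_cases hx2 : fderiv ℝ (fderiv ℝ f) x = 0
    · exact Or.inr ⟨hx2, hx23.resolve_left (not_not.mpr hx2)⟩
    · exact Or.inl ⟨hx1, hx2⟩
  have := hholder.hausdorffMeasure_image_le (by norm_num) zero_le_one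
  rw [show ((3 : ℝ≥0) : ℝ) * 1 = finrank ℝ E by rw [hE]; norm_num, hnull, mul_zero] at this
  exact nonpos_iff_eq_zero.mp this

theorem hausdorffMeasure_image_degenerate_critical_eq_zero (hE : finrank ℝ E = 3)
    (hf : ContDiff ℝ 3 f) (R : ℝ) :
    μH[1] (f '' (closedBall 0 R ∩ {x | fderiv ℝ f x = 0 ∧
      fderiv ℝ (fderiv ℝ f) x = 0 ∧ fderiv ℝ (fderiv ℝ (fderiv ℝ f)) x = 0})) = 0 := by
  set S := closedBall 0 R ∩ {x | fderiv ℝ f x = 0 ∧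
      fderiv ℝ (fderiv ℝ f) x = 0 ∧ fderiv ℝ (fderiv ℝ (fderiv ℝ f)) x = 0}
  have hS : MeasurableSet S :=
    measurableSet_closedBall.inter ((isClosed_eq (hf.continuous_fderiv (by norm_num))
      continuous_const).inter ((isClosed_eq hf.contDiff_fderiv_fderiv.continuous
      continuous_const).inter (isClosed_eq hf.continuous_fderiv_fderiv_fderiv
      continuous_const))).measurableSet
  have hfin : μH[finrank ℝ E] S ≠ ∞ :=
    ((measure_mono inter_subset_left).trans_lt measure_closedBall_lt_top).ne
  -- the third derivative vanishes on `S`, so its modulus of continuity makes `f` locally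
  -- Hölder of exponent 3 on `S` with arbitrarily small constant
  have hsmall : ∀ ε : ℝ≥0, 0 < ε → μH[1] (f '' S) ≤ 2 * ε * μH[finrank ℝ E] S := by
    intro ε hε
    obtain ⟨δ, hδ, hunif⟩ := uniformContinuousOn_iff.mp
      ((isCompact_closedBall (0 : E) R).uniformContinuousOn_of_continuous
        hf.continuous_fderiv_fderiv_fderiv.continuousOn) ε hε
    have hlocal : ∀ c, HolderOnWith (2 * ε) 3 f (S ∩ ball c (δ / 2)) := fun c =>
      HolderOnWith.of_fderiv_eq_zero hf (fun x hx => hx.1.2.1) fun x hx y hy z hz => by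
        have hxy : ‖z - x‖ < δ := (norm_sub_le_of_mem_segment hz).trans_lt (by
          rw [← dist_eq_norm]
          linarith [dist_triangle_right y x c, mem_ball.mp hx.2, mem_ball.mp hy.2])
        have := hunif z ((convex_closedBall 0 R).segment_subset hx.1.1 hy.1.1 hz) x hx.1.1
          (by rwa [dist_eq_norm])
        rw [dist_eq_norm, hx.1.2.2.2, sub_zero] at this
        exact this.le
    have := hausdorffMeasure_image_le_of_holderOnWith_inter_ball hS (by norm_num)
      (half_pos hδ) hlocal zero_le_one
    rwa [show ((3 : ℝ≥0) : ℝ) * 1 = finrank ℝ E by rw [hE]; norm_num, ENNReal.rpow_one,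
      ENNReal.coe_mul, ENNReal.coe_ofNat] at this
  have hlim : Tendsto (fun ε : ℝ≥0 => 2 * (ε : ℝ≥0∞) * μH[finrank ℝ E] S) (𝓝[>] 0) (𝓝 0) := by
    have h0 : Tendsto (fun ε : ℝ≥0 => (ε : ℝ≥0∞)) (𝓝[>] 0) (𝓝 0) :=
      ENNReal.continuous_coe.tendsto' 0 0 ENNReal.coe_zero |>.mono_left nhdsWithin_le_nhds
    have := ENNReal.Tendsto.mul_const (ENNReal.Tendsto.const_mul h0
      (Or.inr (ENNReal.ofNat_ne_top (n := 2)))) (Or.inr hfin)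
    simpa using this
  exact nonpos_iff_eq_zero.mp (ge_of_tendsto hlim
    (eventually_nhdsWithin_of_forall fun ε hε => hsmall ε hε))

theorem volume_image_setOf_fderiv_eq_zero (hE : finrank ℝ E = 3) (hf : ContDiff ℝ 3 f) :
    volume (f '' {x | fderiv ℝ f x = 0}) = 0 := by
  rw [← hausdorffMeasure_real]
  refine measure_mono_null (fun _ ⟨x, hx, hfx⟩ => ?_) (measure_iUnion_null fun n : ℕ =>
    measure_union_null (hausdorffMeasure_image_nondegenerate_critical_eq_zero hE hf n)
      (hausdorffMeasure_image_degenerate_critical_eq_zero hE hf n))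
  obtain ⟨n, hn⟩ := mem_iUnion.mp (iUnion_closedBall_nat (0 : E) ▸ mem_univ x)
  refine mem_iUnion.mpr ⟨n, ?_⟩
  by_cases hdeg : fderiv ℝ (fderiv ℝ f) x = 0 ∧ fderiv ℝ (fderiv ℝ (fderiv ℝ f)) x = 0
  · exact Or.inr ⟨x, ⟨hn, hx, hdeg⟩, hfx⟩
  · exact Or.inl ⟨x, ⟨hn, hx, not_and_or.mp hdeg⟩, hfx⟩

end Sard

theorem IsPreconnected.exists_eq_const_of_volume_image_eq_zero {X : Type*} [TopologicalSpace X]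
    {s : Set X} {f : X → ℝ} (hs : IsPreconnected s) (hf : ContinuousOn f s)
    (h : volume (f '' s) = 0) : ∃ c, ∀ x ∈ s, f x = c := by
  have hsub : (f '' s).Subsingleton := by
    have hord := (hs.image f hf).ordConnected
    intro a ha b hb
    wlog hab : a ≤ b generalizing a b
    · exact (this hb ha (le_of_not_ge hab)).symm
    have := measure_mono_null (hord.out ha hb) h
    rw [Real.volume_Icc, ENNReal.ofReal_eq_zero] at this
    linarith
  rcases s.eq_empty_or_nonempty with rfl | ⟨x₀, hx₀⟩
  · exact ⟨0, fun x hx => hx.elim⟩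
  exact ⟨f x₀, fun x hx => hsub (mem_image_of_mem f hx) (mem_image_of_mem f hx₀)⟩

/-- Lemma 4 of the paper (C³ version): a C³ function on ℝ³ is constant on any
preconnected subset of its critical set. -/
theorem critical_set_constant_C3
    (f : EuclideanSpace ℝ (Fin 3) → ℝ) (hf : ContDiff ℝ 3 f)
    (X : Set (EuclideanSpace ℝ (Fin 3))) (hX : IsPreconnected X)
    (hcrit : ∀ x ∈ X, fderiv ℝ f x = 0) :
    ∃ c : ℝ, ∀ x ∈ X, f x = c :=
  hX.exists_eq_const_of_volume_image_eq_zero hf.continuous.continuousOn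
    (measure_mono_null (image_mono hcrit)
      (volume_image_setOf_fderiv_eq_zero finrank_euclideanSpace_fin hf))
end

section
/- Let n be a natural number, let f : ℝⁿ → ℝ be a smooth (C^∞) function, and let X be a preconnected subset of the critical set {x ∈ ℝⁿ | df_x = 0} of f. Then the restriction of f to X is constant: there exists c ∈ ℝ such that f(x) = c for all x ∈ X. -/
set_option maxHeartbeats 1000000

open Metric Set MeasureTheory
open scoped NNReal ENNReal

noncomputable section


universe u
variable {E : Type u} [NormedAddCommGroup E] [NormedSpace ℝ E]

theorem taylor_bound_aux (m : ℕ) :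
    ∀ {F : Type u} [NormedAddCommGroup F] [NormedSpace ℝ F] (g : E → F) (s : Set E),
    IsOpen s → ContDiffOn ℝ (⊤ : ℕ∞) g s → ∀ (x : E) (r M : ℝ), ball x r ⊆ s →
    (∀ j, 1 ≤ j → j ≤ m → iteratedFDeriv ℝ j g x = 0) →
    (∀ z ∈ ball x r, ‖iteratedFDeriv ℝ (m + 1) g z‖ ≤ M) →
    ∀ y ∈ ball x r, ‖g y - g x‖ ≤ M * ‖y - x‖ ^ (m + 1) := by
  induction m with
  | zero =>
    intro F _ _ g s hs hg x r M hball hvan hM y hy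
    have hx : x ∈ ball x r := mem_ball_self (lt_of_le_of_lt dist_nonneg hy)
    have hseg : segment ℝ x y ⊆ ball x r := (convex_ball x r).segment_subset hx hy
    have hmvt := Convex.norm_image_sub_le_of_norm_hasFDerivWithin_le
      (f := g) (f' := fun z => fderiv ℝ g z) (s := segment ℝ x y) (C := M)
      (fun z hz => (((hg.contDiffAt (hs.mem_nhds (hball (hseg hz)))).differentiableAt
        (by simp)).hasFDerivAt).hasFDerivWithinAt)
      (fun z hz => by
        refine le_trans (ContinuousLinearMap.opNorm_le_bound _ (norm_nonneg _) fun u => ?_)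
          (hM z (hseg hz))
        have h1 : fderiv ℝ g z u = iteratedFDeriv ℝ 1 g z (fun _ => u) := by
          rw [iteratedFDeriv_one_apply]
        rw [h1]
        refine le_trans (ContinuousMultilinearMap.le_opNorm _ _) ?_
        simp)
      (convex_segment x y) (left_mem_segment ℝ x y) (right_mem_segment ℝ x y)
    simpa using hmvt
  | succ m IH =>
    intro F _ _ g s hs hg x r M hball hvan hM y hy
    have hx : x ∈ ball x r := mem_ball_self (lt_of_le_of_lt dist_nonneg hy)
    have hM0 : 0 ≤ M := le_trans (norm_nonneg _) (hM x hx)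
    have hg' : ContDiffOn ℝ (⊤ : ℕ∞) (fderiv ℝ g) s := by
      refine hg.fderiv_of_isOpen hs ?_
      exact_mod_cast le_top
    have hvan' : ∀ j, 1 ≤ j → j ≤ m → iteratedFDeriv ℝ j (fderiv ℝ g) x = 0 := by
      intro j h1 h2
      ext w u
      have h := iteratedFDeriv_succ_apply_right (𝕜 := ℝ) (f := g) (x := x) (n := j)
        (Fin.snoc w u)
      rw [hvan (j + 1) (by omega) (by omega)] at h
      simp only [Fin.init_snoc, Fin.snoc_last] at h
      simpa using h.symm
    have hM' : ∀ z ∈ ball x r, ‖iteratedFDeriv ℝ (m + 1) (fderiv ℝ g) z‖ ≤ M := by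
      intro z hz
      refine ContinuousMultilinearMap.opNorm_le_bound hM0 fun w => ?_
      refine ContinuousLinearMap.opNorm_le_bound _ (by positivity) fun u => ?_
      have h := iteratedFDeriv_succ_apply_right (𝕜 := ℝ) (f := g) (x := z) (n := m + 1)
        (Fin.snoc w u)
      simp only [Fin.init_snoc, Fin.snoc_last] at h
      rw [← h]
      refine le_trans (ContinuousMultilinearMap.le_opNorm _ _) ?_
      have hprod : (∏ i, ‖(Fin.snoc w u : Fin (m + 1 + 1) → E) i‖) = (∏ i, ‖w i‖) * ‖u‖ := by
        rw [Fin.prod_univ_castSucc]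
        simp
      rw [hprod, ← mul_assoc]
      exact mul_le_mul_of_nonneg_right
        (mul_le_mul_of_nonneg_right (hM z hz) (by positivity)) (norm_nonneg _)
    have hIH := IH (fderiv ℝ g) s hs hg' x r M hball hvan' hM'
    have h0 : fderiv ℝ g x = 0 := by
      ext u
      have h1 : fderiv ℝ g x u = iteratedFDeriv ℝ 1 g x (fun _ => u) := by
        rw [iteratedFDeriv_one_apply]
      rw [h1, hvan 1 le_rfl (by omega)]
      simp
    have hbd : ∀ z ∈ ball x r, ‖fderiv ℝ g z‖ ≤ M * ‖z - x‖ ^ (m + 1) := by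
      intro z hz
      have := hIH z hz
      rwa [h0, sub_zero] at this
    have hseg : segment ℝ x y ⊆ ball x r := (convex_ball x r).segment_subset hx hy
    have hmvt := Convex.norm_image_sub_le_of_norm_hasFDerivWithin_le
      (f := g) (f' := fun z => fderiv ℝ g z) (s := segment ℝ x y)
      (C := M * ‖y - x‖ ^ (m + 1))
      (fun z hz => (((hg.contDiffAt (hs.mem_nhds (hball (hseg hz)))).differentiableAt
        (by simp)).hasFDerivAt).hasFDerivWithinAt)
      (fun z hz => by
        refine le_trans (hbd z (hseg hz)) ?_
        have hzx : ‖z - x‖ ≤ ‖y - x‖ := by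
          rw [segment_eq_image'] at hz
          obtain ⟨t, ht, rfl⟩ := hz
          rw [add_sub_cancel_left, norm_smul, Real.norm_eq_abs,
            abs_of_nonneg ht.1]
          nlinarith [norm_nonneg (y - x), ht.2]
        exact mul_le_mul_of_nonneg_left
          (pow_le_pow_left₀ (norm_nonneg _) hzx _) hM0)
      (convex_segment x y) (left_mem_segment ℝ x y) (right_mem_segment ℝ x y)
    calc ‖g y - g x‖ ≤ M * ‖y - x‖ ^ (m + 1) * ‖y - x‖ := hmvt
    _ = M * ‖y - x‖ ^ (m + 1 + 1) := by ring


lemma null_of_locally_null {α : Type*} [TopologicalSpace α]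
    [SecondCountableTopology α] (A : Set α) (g : α → ℝ)
    (h : ∀ x ∈ A, ∃ U : Set α, IsOpen U ∧ x ∈ U ∧ volume (g '' (A ∩ U)) = 0) :
    volume (g '' A) = 0 := by
  choose U hUopen hUmem hUnull using h
  obtain ⟨T, hTcount, hTeq⟩ := TopologicalSpace.isOpen_iUnion_countable
    (fun i : A => U i i.2) (fun i => hUopen i i.2)
  have hsub : g '' A ⊆ ⋃ i ∈ T, g '' (A ∩ U i i.2) := by
    rintro _ ⟨x, hx, rfl⟩
    have : x ∈ ⋃ i : A, U i i.2 := mem_iUnion.2 ⟨⟨x, hx⟩, hUmem x hx⟩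
    rw [← hTeq] at this
    obtain ⟨i, hiT, hxU⟩ := mem_iUnion₂.1 this
    exact mem_iUnion₂.2 ⟨i, hiT, ⟨x, ⟨hx, hxU⟩, rfl⟩⟩
  refine measure_mono_null hsub ?_
  exact (measure_biUnion_null_iff hTcount).2 fun i _ => hUnull i i.2

lemma holderOnWith_of_dist_le {α : Type*} [MetricSpace α] {C : ℝ} (hC : 0 ≤ C)
    {r : ℝ≥0} {f : α → ℝ} {s : Set α}
    (h : ∀ p ∈ s, ∀ q ∈ s, dist (f p) (f q) ≤ C * dist p q ^ (r : ℝ)) :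
    HolderOnWith C.toNNReal r f s := by
  intro p hp q hq
  rw [edist_dist, edist_dist,
    ENNReal.ofReal_rpow_of_nonneg dist_nonneg r.coe_nonneg]
  have : (↑C.toNNReal : ℝ≥0∞) = ENNReal.ofReal C := rfl
  rw [this, ← ENNReal.ofReal_mul hC]
  exact ENNReal.ofReal_le_ofReal (h p hp q hq)

theorem top_stratum_null (n : ℕ) (f : EuclideanSpace ℝ (Fin n) → ℝ)
    (s : Set (EuclideanSpace ℝ (Fin n))) (hs : IsOpen s)
    (hf : ContDiffOn ℝ (⊤ : ℕ∞) f s) :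
    volume (f '' {x ∈ s | ∀ j, 1 ≤ j → j ≤ n → iteratedFDeriv ℝ j f x = 0}) = 0 := by
  set A := {x ∈ s | ∀ j, 1 ≤ j → j ≤ n → iteratedFDeriv ℝ j f x = 0} with hA
  refine null_of_locally_null A f fun x hx => ?_
  obtain ⟨ε, hε, hball⟩ := Metric.isOpen_iff.1 hs x hx.1
  set r := ε / 3 with hr
  have hr0 : 0 < r := by positivity
  have hclosed : closedBall x (2 * r) ⊆ s :=
    subset_trans (closedBall_subset_ball (by rw [hr]; linarith)) hball
  -- bound on the (n+1)-st derivative on the compact closed ball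
  have hcont : ContinuousOn (iteratedFDeriv ℝ (n + 1) f) s := fun z hz =>
    (((hf.contDiffAt (hs.mem_nhds hz)).iteratedFDeriv_right
      (m := ((⊤ : ℕ∞) : WithTop ℕ∞)) (by exact_mod_cast le_top)).continuousAt).continuousWithinAt
  obtain ⟨c, hc⟩ := (isCompact_closedBall x (2 * r)).exists_bound_of_continuousOn
    (hcont.mono hclosed)
  set M := max c 0 with hM
  have hM0 : 0 ≤ M := le_max_right _ _
  refine ⟨ball x (r / 2), isOpen_ball, mem_ball_self (by positivity), ?_⟩
  -- Hölder estimate with exponent n+1 on A ∩ ball x (r/2)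
  have hkey : ∀ p ∈ A ∩ ball x (r / 2), ∀ q ∈ A ∩ ball x (r / 2),
      dist (f p) (f q) ≤ M * dist p q ^ ((n + 1 : ℝ≥0) : ℝ) := by
    intro p hp q hq
    have hpballs : ball p r ⊆ s := by
      refine subset_trans (fun z hz => ?_) hclosed
      have := mem_ball.1 hp.2
      calc dist z x ≤ dist z p + dist p x := dist_triangle _ _ _
      _ ≤ 2 * r := by rw [mem_ball] at hz; linarith [mem_ball.1 hp.2]
    have hqp : q ∈ ball p r := by
      rw [mem_ball]
      calc dist q p ≤ dist q x + dist x p := dist_triangle _ _ _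
      _ < r := by
        have h1 := mem_ball.1 hq.2
        have h2 := mem_ball.1 hp.2
        rw [dist_comm x p]; linarith
    have hbd : ∀ z ∈ ball p r, ‖iteratedFDeriv ℝ (n + 1) f z‖ ≤ M := by
      intro z hz
      refine le_trans (hc z ?_) (le_max_left _ _)
      rw [mem_closedBall]
      calc dist z x ≤ dist z p + dist p x := dist_triangle _ _ _
      _ ≤ 2 * r := by rw [mem_ball] at hz; linarith [le_of_lt (mem_ball.1 hp.2)]
    have ht := taylor_bound_aux n f s hs hf p r M hpballs
      (fun j h1 h2 => hp.1.2 j h1 h2) hbd q hqp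
    rw [Real.dist_eq, dist_eq_norm]
    have : ((n + 1 : ℝ≥0) : ℝ) = ((n + 1 : ℕ) : ℝ) := by push_cast; ring
    rw [this, Real.rpow_natCast]
    calc |f p - f q| = ‖f q - f p‖ := by rw [Real.norm_eq_abs, abs_sub_comm]
    _ ≤ M * ‖q - p‖ ^ (n + 1) := ht
    _ = M * dist p q ^ (n + 1) := by rw [dist_comm, dist_eq_norm]
  have hHolder := holderOnWith_of_dist_le hM0 hkey
  have hdim := hHolder.dimH_image_le (by positivity)
  have hdimA : dimH (A ∩ ball x (r / 2)) ≤ (n : ℝ≥0∞) := by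
    refine le_trans (dimH_mono (subset_univ _)) ?_
    rw [Real.dimH_univ_eq_finrank, finrank_euclideanSpace_fin]
  have hlt : dimH (f '' (A ∩ ball x (r / 2))) < 1 := by
    refine lt_of_le_of_lt (hdim.trans (ENNReal.div_le_div_right hdimA _)) ?_
    rw [ENNReal.div_lt_iff (by simp) (by simp)]
    · norm_cast
      simpa using Nat.lt_succ_self n
  have hH1 : μH[(1 : ℝ)] (f '' (A ∩ ball x (r / 2))) = 0 := by
    have := hausdorffMeasure_of_dimH_lt (d := 1) (by simpa using hlt)
    simpa using this
  rw [← MeasureTheory.hausdorffMeasure_real]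
  exact hH1



theorem chart_step (n : ℕ)
    (IH : ∀ (g : EuclideanSpace ℝ (Fin n) → ℝ) (V : Set (EuclideanSpace ℝ (Fin n))),
      IsOpen V → ContDiffOn ℝ (⊤ : ℕ∞) g V →
      volume (g '' {z ∈ V | fderiv ℝ g z = 0}) = 0)
    (f : (EuclideanSpace ℝ (Fin (n + 1))) → ℝ) (s : Set (EuclideanSpace ℝ (Fin (n + 1))))
    (hs : IsOpen s) (hf : ContDiffOn ℝ (⊤ : ℕ∞) f s) (k : ℕ) (hk : 1 ≤ k)
    (x : (EuclideanSpace ℝ (Fin (n + 1)))) (hxs : x ∈ s)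
    (hxk : iteratedFDeriv ℝ (k + 1) f x ≠ 0) :
    ∃ U, IsOpen U ∧ x ∈ U ∧
      volume (f '' ({y ∈ s | ∀ j, 1 ≤ j → j ≤ k → iteratedFDeriv ℝ j f y = 0} ∩ U)) = 0 := by
  -- a direction where the (k+1)-st derivative does not vanish
  obtain ⟨v, hv⟩ : ∃ v, iteratedFDeriv ℝ (k + 1) f x v ≠ 0 := by
    by_contra h
    push_neg at h
    exact hxk (ContinuousMultilinearMap.ext fun v => by simpa using h v)
  -- the auxiliary function w, a k-th derivative entry
  have hDk : ∀ y ∈ s, ContDiffAt ℝ ((⊤ : ℕ∞) : WithTop ℕ∞) (iteratedFDeriv ℝ k f) y :=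
    fun y hy => (hf.contDiffAt (hs.mem_nhds hy)).iteratedFDeriv_right
      (m := ((⊤ : ℕ∞) : WithTop ℕ∞)) (by exact_mod_cast le_top)
  set ev : ContinuousMultilinearMap ℝ (fun _ : Fin k => (EuclideanSpace ℝ (Fin (n + 1)))) ℝ →L[ℝ] ℝ :=
    ContinuousMultilinearMap.apply ℝ (fun _ : Fin k => (EuclideanSpace ℝ (Fin (n + 1)))) ℝ (Fin.tail v) with hev
  set w : (EuclideanSpace ℝ (Fin (n + 1))) → ℝ := fun z => iteratedFDeriv ℝ k f z (Fin.tail v) with hwdef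
  have hw : ∀ y ∈ s, ContDiffAt ℝ (⊤ : ℕ∞) w y := fun y hy =>
    (ev.contDiff.contDiffAt).comp y (hDk y hy)
  have hwOn : ContDiffOn ℝ (⊤ : ℕ∞) w s := fun y hy => (hw y hy).contDiffWithinAt
  have hwd : ∀ y ∈ s, HasFDerivAt w
      (ev.comp (fderiv ℝ (iteratedFDeriv ℝ k f) y)) y := fun y hy =>
    ev.hasFDerivAt.comp y ((hDk y hy).differentiableAt
      (by simp)).hasFDerivAt
  set l : (EuclideanSpace ℝ (Fin (n + 1))) →L[ℝ] ℝ := fderiv ℝ w x with hl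
  set e : (EuclideanSpace ℝ (Fin (n + 1))) := v 0 with he
  have hc : l (v 0) ≠ 0 := by
    have h1 : l (v 0) = iteratedFDeriv ℝ (k + 1) f x v := by
      rw [hl, (hwd x hxs).fderiv, iteratedFDeriv_succ_apply_left]
      rfl
    rw [h1]; exact hv
  set c : ℝ := l e with hcdef
  -- the straightening map Φ
  set Φ : (EuclideanSpace ℝ (Fin (n + 1))) → (EuclideanSpace ℝ (Fin (n + 1))) := fun z => z + (c⁻¹ * (w z - l z)) • e with hΦdef
  have hΦs : ∀ y ∈ s, ContDiffAt ℝ (⊤ : ℕ∞) Φ y := by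
    intro y hy
    exact contDiffAt_id.add
      (((contDiffAt_const.mul ((hw y hy).sub l.contDiff.contDiffAt)).smul
        contDiffAt_const))
  -- derivative of Φ
  set A : (EuclideanSpace ℝ (Fin (n + 1))) → ((EuclideanSpace ℝ (Fin (n + 1))) →L[ℝ] (EuclideanSpace ℝ (Fin (n + 1)))) := fun y =>
    ContinuousLinearMap.id ℝ (EuclideanSpace ℝ (Fin (n + 1))) + (c⁻¹ • (fderiv ℝ w y - l)).smulRight e with hAdef
  have hΦd : ∀ y ∈ s, HasFDerivAt Φ (A y) y := by
    intro y hy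
    have h1 : HasFDerivAt (fun z => c⁻¹ * (w z - l z))
        (c⁻¹ • (fderiv ℝ w y - l)) y := by
      have hwy : HasFDerivAt w (fderiv ℝ w y) y :=
        ((hw y hy).differentiableAt (by simp)).hasFDerivAt
      exact ((hwy.sub l.hasFDerivAt).const_mul c⁻¹)
    have h2 := (hasFDerivAt_id y).add ((h1.smul (hasFDerivAt_const e y)))
    have h3 : HasFDerivAt Φ (ContinuousLinearMap.id ℝ (EuclideanSpace ℝ (Fin (n + 1))) +
        ((c⁻¹ * (w y - l y)) • 0 + (c⁻¹ • (fderiv ℝ w y - l)).smulRight e)) y := h2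
    refine h3.congr_fderiv ?_
    ext u
    simp [A]
  have hAx : A x = ContinuousLinearMap.id ℝ (EuclideanSpace ℝ (Fin (n + 1))) := by
    ext u
    simp [hAdef, hl]
  -- fderiv Φ y = A y on s, and continuity of A on s
  have hAcont : ContinuousOn A s := by
    have h1 : ContinuousOn (fun y => fderiv ℝ w y) s :=
      hwOn.continuousOn_fderiv_of_isOpen hs (by exact_mod_cast le_top)
    have hsr : Continuous fun T : (EuclideanSpace ℝ (Fin (n + 1))) →L[ℝ] ℝ =>
        T.smulRight e := by
      have : (fun T : (EuclideanSpace ℝ (Fin (n + 1))) →L[ℝ] ℝ => T.smulRight e)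
          = fun T => ((ContinuousLinearMap.smulRightL ℝ
            (EuclideanSpace ℝ (Fin (n + 1))) (EuclideanSpace ℝ (Fin (n + 1)))) T) e := rfl
      rw [this]
      exact ((ContinuousLinearMap.smulRightL ℝ _ _).continuous).clm_apply continuous_const
    have h2 : Continuous fun T : (EuclideanSpace ℝ (Fin (n + 1))) →L[ℝ] ℝ =>
        ContinuousLinearMap.id ℝ (EuclideanSpace ℝ (Fin (n + 1))) + (c⁻¹ • (T - l)).smulRight e := by
      exact continuous_const.add
        (hsr.comp ((continuous_id.sub continuous_const).const_smul c⁻¹))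
    exact h2.comp_continuousOn h1
  set U₀ : Set (EuclideanSpace ℝ (Fin (n + 1))) := s ∩ A ⁻¹' Metric.ball (ContinuousLinearMap.id ℝ (EuclideanSpace ℝ (Fin (n + 1)))) 1 with hU₀
  have hU₀open : IsOpen U₀ := hAcont.isOpen_inter_preimage hs isOpen_ball
  have hxU₀ : x ∈ U₀ := by
    refine ⟨hxs, ?_⟩
    simp [hAx]
  -- invertibility of the derivative on U₀
  have hinv : ∀ y ∈ U₀, ∃ B : (EuclideanSpace ℝ (Fin (n + 1))) ≃L[ℝ] (EuclideanSpace ℝ (Fin (n + 1))), (B : (EuclideanSpace ℝ (Fin (n + 1))) →L[ℝ] (EuclideanSpace ℝ (Fin (n + 1)))) = A y := by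
    intro y hy
    have hnorm : ‖(1 : (EuclideanSpace ℝ (Fin (n + 1))) →L[ℝ] (EuclideanSpace ℝ (Fin (n + 1)))) - A y‖ < 1 := by
      have := hy.2
      rw [mem_preimage, Metric.mem_ball, dist_eq_norm] at this
      rwa [← norm_neg, neg_sub, ContinuousLinearMap.one_def]
    refine ⟨ContinuousLinearEquiv.ofUnit (Units.oneSub _ hnorm), ?_⟩
    show (1 : (EuclideanSpace ℝ (Fin (n + 1))) →L[ℝ] (EuclideanSpace ℝ (Fin (n + 1)))) - ((1 : (EuclideanSpace ℝ (Fin (n + 1))) →L[ℝ] (EuclideanSpace ℝ (Fin (n + 1)))) - A y) = A y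
    rw [sub_sub_cancel]
  -- local inverse at x
  have h1top : (1 : WithTop ℕ∞) ≤ ((⊤ : ℕ∞) : WithTop ℕ∞) := by exact_mod_cast le_top
  obtain ⟨Bx, hBx⟩ := hinv x hxU₀
  have hΦ'x : HasFDerivAt Φ (Bx : (EuclideanSpace ℝ (Fin (n + 1))) →L[ℝ] (EuclideanSpace ℝ (Fin (n + 1)))) x := by
    rw [hBx]; exact hΦd x hxs
  set P := (hΦs x hxs).toOpenPartialHomeomorph Φ hΦ'x (by simp) with hP
  have hPcoe : ⇑P = Φ := ContDiffAt.toOpenPartialHomeomorph_coe _ _ _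
  have hxP : x ∈ P.source := ContDiffAt.mem_toOpenPartialHomeomorph_source _ _ _
  set src : Set (EuclideanSpace ℝ (Fin (n + 1))) := P.source ∩ U₀ with hsrc
  have hsrcopen : IsOpen src := P.open_source.inter hU₀open
  have hxsrc : x ∈ src := ⟨hxP, hxU₀⟩
  set tgt : Set (EuclideanSpace ℝ (Fin (n + 1))) := P.symm.source ∩ P.symm ⁻¹' src with htgt
  have htgtopen : IsOpen tgt := P.symm.isOpen_inter_preimage hsrcopen
  -- smoothness of the local inverse on tgt
  have hsymm : ∀ a ∈ tgt, ContDiffAt ℝ (⊤ : ℕ∞) P.symm a := by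
    intro a ha
    have haT : a ∈ P.target := by rw [← P.symm_source]; exact ha.1
    have hya : P.symm a ∈ U₀ := ha.2.2
    obtain ⟨B, hB⟩ := hinv (P.symm a) hya
    refine P.contDiffAt_symm (f₀' := B) haT ?_ ?_
    · rw [hPcoe, hB]; exact hΦd _ hya.1
    · rw [hPcoe]; exact hΦs _ hya.1
  -- the hyperplane ker l and its parametrization
  have hlsurj : LinearMap.range (l : EuclideanSpace ℝ (Fin (n + 1)) →ₗ[ℝ] ℝ) = ⊤ := by
    rw [LinearMap.range_eq_top]
    intro r
    refine ⟨(r / c) • e, ?_⟩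
    rw [_root_.map_smul]
    simp only [ContinuousLinearMap.coe_coe]
    rw [← hcdef, smul_eq_mul]
    field_simp
  have hKrank : Module.finrank ℝ (LinearMap.ker (l : EuclideanSpace ℝ (Fin (n + 1)) →ₗ[ℝ] ℝ)) = n := by
    have h1 := LinearMap.finrank_range_add_finrank_ker
      (K := ℝ) (V := EuclideanSpace ℝ (Fin (n + 1))) (V₂ := ℝ) l
    have hrr : LinearMap.range ((l : (EuclideanSpace ℝ (Fin (n + 1))) →ₗ[ℝ] ℝ)) = ⊤ :=
      hlsurj
    have hker : LinearMap.ker ((l : (EuclideanSpace ℝ (Fin (n + 1))) →ₗ[ℝ] ℝ))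
        = LinearMap.ker (l : EuclideanSpace ℝ (Fin (n + 1)) →ₗ[ℝ] ℝ) := rfl
    rw [hrr, hker] at h1
    have htop : Module.finrank ℝ (⊤ : Submodule ℝ ℝ) = 1 := by simp
    rw [htop, finrank_euclideanSpace_fin] at h1
    omega
  obtain ⟨ι⟩ := FiniteDimensional.nonempty_linearEquiv_of_finrank_eq
    (R := ℝ) (M := EuclideanSpace ℝ (Fin n)) (M' := LinearMap.ker (l : EuclideanSpace ℝ (Fin (n + 1)) →ₗ[ℝ] ℝ))
    (by rw [finrank_euclideanSpace_fin, hKrank])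
  set ιc := ι.toContinuousLinearEquiv with hιc
  set ρ : EuclideanSpace ℝ (Fin n) → (EuclideanSpace ℝ (Fin (n + 1))) := fun z => ((ιc z : LinearMap.ker (l : EuclideanSpace ℝ (Fin (n + 1)) →ₗ[ℝ] ℝ)) : (EuclideanSpace ℝ (Fin (n + 1)))) with hρ
  have hρlin : ContDiff ℝ (⊤ : ℕ∞) ρ := by
    have h1 := ((LinearMap.ker (l : EuclideanSpace ℝ (Fin (n + 1)) →ₗ[ℝ] ℝ)).subtypeL.comp
      (ιc : EuclideanSpace ℝ (Fin n) →L[ℝ] LinearMap.ker (l : EuclideanSpace ℝ (Fin (n + 1)) →ₗ[ℝ] ℝ))).contDiff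
      (n := ((⊤ : ℕ∞) : WithTop ℕ∞))
    exact h1
  set V : Set (EuclideanSpace ℝ (Fin n)) := ρ ⁻¹' tgt with hV
  have hVopen : IsOpen V := htgtopen.preimage hρlin.continuous
  set g : EuclideanSpace ℝ (Fin n) → ℝ := fun z => f (P.symm (ρ z)) with hg
  have hsymm_mem : ∀ a ∈ tgt, P.symm a ∈ s := fun a ha => ha.2.2.1
  have hgat : ∀ z ∈ V, ContDiffAt ℝ (⊤ : ℕ∞) (fun z => P.symm (ρ z)) z := by
    intro z hz
    exact (hsymm (ρ z) hz).comp z hρlin.contDiffAt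
  have hgV : ContDiffOn ℝ (⊤ : ℕ∞) g V := by
    intro z hz
    refine ContDiffAt.contDiffWithinAt ?_
    exact ((hf.contDiffAt (hs.mem_nhds (hsymm_mem (ρ z) hz))).comp z (hgat z hz))
  have null1 : volume (g '' {z ∈ V | fderiv ℝ g z = 0}) = 0 := IH g V hVopen hgV
  refine ⟨src, hsrcopen, hxsrc, ?_⟩
  refine measure_mono_null ?_ null1
  rintro _ ⟨y, ⟨hyCk, hysrc⟩, rfl⟩
  have hys : y ∈ s := hyCk.1
  have hwy : w y = 0 := by
    have h0 : iteratedFDeriv ℝ k f y = 0 := hyCk.2 k hk le_rfl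
    show iteratedFDeriv ℝ k f y (Fin.tail v) = 0
    rw [h0]
    rfl
  have hfdy : fderiv ℝ f y = 0 := by
    ext u
    have h1 : iteratedFDeriv ℝ 1 f y = 0 := hyCk.2 1 le_rfl hk
    have h2 := iteratedFDeriv_one_apply (𝕜 := ℝ) (f := f) (x := y) (fun _ => u)
    rw [h1] at h2
    simpa using h2.symm
  set a : EuclideanSpace ℝ (Fin (n + 1)) := Φ y with ha
  have haK : a ∈ LinearMap.ker (l : EuclideanSpace ℝ (Fin (n + 1)) →ₗ[ℝ] ℝ) := by
    rw [LinearMap.mem_ker]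
    show l (y + (c⁻¹ * (w y - l y)) • e) = 0
    rw [map_add, _root_.map_smul, hwy, smul_eq_mul]
    rw [← hcdef]
    field_simp
    ring
  have haPy : a = P y := by rw [hPcoe]
  have hatgt : a ∈ tgt := by
    have h1 : a ∈ P.target := by rw [haPy]; exact P.map_source hysrc.1
    have h2 : P.symm a = y := by rw [haPy]; exact P.left_inv hysrc.1
    refine ⟨by rw [P.symm_source]; exact h1, ?_⟩
    rw [mem_preimage, h2]
    exact hysrc
  set z : EuclideanSpace ℝ (Fin n) := ιc.symm ⟨a, haK⟩ with hz
  have hρz : ρ z = a := by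
    show ((ιc (ιc.symm ⟨a, haK⟩) : LinearMap.ker (l : EuclideanSpace ℝ (Fin (n + 1)) →ₗ[ℝ] ℝ)) : EuclideanSpace ℝ (Fin (n + 1))) = a
    rw [ιc.apply_symm_apply]
  have hzV : z ∈ V := by
    rw [hV, mem_preimage, hρz]
    exact hatgt
  have hPy : P.symm (ρ z) = y := by rw [hρz, haPy]; exact P.left_inv hysrc.1
  refine ⟨z, ⟨hzV, ?_⟩, ?_⟩
  · -- fderiv g z = 0
    have hdiff : DifferentiableAt ℝ (fun z => P.symm (ρ z)) z :=
      (hgat z hzV).differentiableAt (by simp)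
    have hfd : DifferentiableAt ℝ f (P.symm (ρ z)) :=
      (hf.contDiffAt (hs.mem_nhds (hsymm_mem (ρ z) hzV))).differentiableAt
        (by simp)
    have hcomp := fderiv_comp (𝕜 := ℝ) z hfd hdiff
    have : g = f ∘ fun z => P.symm (ρ z) := rfl
    rw [this, hcomp, hPy, hfdy]
    ext u
    simp
  · show f (P.symm (ρ z)) = f y
    rw [hPy]

theorem morse_aux : ∀ (n : ℕ) (f : EuclideanSpace ℝ (Fin n) → ℝ)
    (s : Set (EuclideanSpace ℝ (Fin n))), IsOpen s → ContDiffOn ℝ (⊤ : ℕ∞) f s →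
    volume (f '' {x ∈ s | fderiv ℝ f x = 0}) = 0 := by
  intro n
  induction n with
  | zero =>
    intro f s hs hf
    refine measure_mono_null (image_mono (f := f) ?_) (top_stratum_null 0 f s hs hf)
    exact fun x hx => ⟨hx.1, fun j h1 h2 => absurd (h1.trans h2) (by omega)⟩
  | succ n IH =>
    intro f s hs hf
    set C : ℕ → Set (EuclideanSpace ℝ (Fin (n + 1))) := fun k =>
      {y ∈ s | ∀ j, 1 ≤ j → j ≤ k → iteratedFDeriv ℝ j f y = 0} with hC
    -- critical set equals C 1
    have hC1 : {x ∈ s | fderiv ℝ f x = 0} = C 1 := by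
      ext y
      constructor
      · rintro ⟨hy, hfd⟩
        refine ⟨hy, fun j h1 h2 => ?_⟩
        have : j = 1 := by omega
        subst this
        ext m
        rw [iteratedFDeriv_one_apply, hfd]
        rfl
      · rintro ⟨hy, hvan⟩
        refine ⟨hy, ?_⟩
        ext u
        have h1 : iteratedFDeriv ℝ 1 f y = 0 := hvan 1 le_rfl le_rfl
        have h2 := iteratedFDeriv_one_apply (𝕜 := ℝ) (f := f) (x := y) (fun _ => u)
        rw [h1] at h2
        simpa using h2.symm
    -- strata are null
    have hstrata : ∀ k, 1 ≤ k → volume (f '' (C k \ C (k + 1))) = 0 := by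
      intro k hk
      refine null_of_locally_null (C k \ C (k + 1)) f fun x hx => ?_
      have hxs : x ∈ s := hx.1.1
      have hxk : iteratedFDeriv ℝ (k + 1) f x ≠ 0 := by
        intro hzero
        exact hx.2 ⟨hxs, fun j h1 h2 => by
          rcases Nat.lt_or_ge j (k + 1) with h | h
          · exact hx.1.2 j h1 (by omega)
          · have : j = k + 1 := by omega
            subst this
            exact hzero⟩
      obtain ⟨U, hUopen, hxU, hUnull⟩ := chart_step n IH f s hs hf k hk x hxs hxk
      refine ⟨U, hUopen, hxU, ?_⟩
      refine measure_mono_null (image_mono (f := f) ?_) hUnull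
      exact inter_subset_inter_left U diff_subset
    -- decomposition of C 1
    have hdecomp : C 1 ⊆ C (n + 1) ∪ ⋃ k ∈ Set.Icc 1 n, (C k \ C (k + 1)) := by
      intro x hx
      by_cases hxn : x ∈ C (n + 1)
      · exact Or.inl hxn
      · classical
        have hex : ∃ m, x ∉ C (m + 1) := ⟨n, hxn⟩
        set m := Nat.find hex with hm
        have hspec : x ∉ C (m + 1) := Nat.find_spec hex
        have hmle : m ≤ n := Nat.find_min' hex hxn
        have hm1 : 1 ≤ m := by
          rcases Nat.eq_zero_or_pos m with h | h
          · exfalso; rw [h] at hspec; exact hspec hx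
          · exact h
        have hxm : x ∈ C m := by
          have := Nat.find_min hex (m := m - 1) (by omega)
          simpa [show m - 1 + 1 = m by omega] using not_not.1 this
        exact Or.inr (mem_biUnion ⟨hm1, hmle⟩ ⟨hxm, hspec⟩)
    rw [hC1]
    have himg : f '' C 1 ⊆ f '' (C (n + 1)) ∪ ⋃ k ∈ Set.Icc 1 n, f '' (C k \ C (k + 1)) := by
      rintro _ ⟨x, hx, rfl⟩
      rcases hdecomp hx with h | h
      · exact Or.inl ⟨x, h, rfl⟩
      · obtain ⟨k, hk, hxk⟩ := mem_iUnion₂.1 h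
        exact Or.inr (mem_iUnion₂.2 ⟨k, hk, ⟨x, hxk, rfl⟩⟩)
    refine measure_mono_null himg (measure_union_null ?_ ?_)
    · exact top_stratum_null (n + 1) f s hs hf
    · exact (measure_biUnion_null_iff (Set.to_countable _)).2
        fun k hk => hstrata k hk.1

/-- Lemma 4 of the paper (smooth version in ℝⁿ): a C^∞ function on ℝⁿ is constant on
any preconnected subset of its critical set. -/
theorem critical_set_constant_smooth (n : ℕ)
    (f : EuclideanSpace ℝ (Fin n) → ℝ) (hf : ContDiff ℝ (⊤ : ℕ∞) f)
    (X : Set (EuclideanSpace ℝ (Fin n))) (hX : IsPreconnected X)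
    (hcrit : ∀ x ∈ X, fderiv ℝ f x = 0) :
    ∃ c : ℝ, ∀ x ∈ X, f x = c := by
  rcases X.eq_empty_or_nonempty with rfl | ⟨x₀, hx₀⟩
  · exact ⟨0, by simp⟩
  refine ⟨f x₀, fun x hx => ?_⟩
  by_contra hne
  have hnull : volume (f '' X) = 0 := by
    refine measure_mono_null (image_mono (f := f) ?_)
      (morse_aux n f univ isOpen_univ ((hf.of_le (by simp)).contDiffOn))
    exact fun y hy => ⟨mem_univ y, hcrit y hy⟩
  have hconn : IsPreconnected (f '' X) := hX.image f hf.continuous.continuousOn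
  have hmem1 : f x ∈ f '' X := ⟨x, hx, rfl⟩
  have hmem0 : f x₀ ∈ f '' X := ⟨x₀, hx₀, rfl⟩
  set a := min (f x) (f x₀) with hadef
  set b := max (f x) (f x₀) with hbdef
  have hab : a < b := by
    rcases lt_or_gt_of_ne hne with h | h
    · rw [hadef, hbdef, min_eq_left h.le, max_eq_right h.le]; exact h
    · rw [hadef, hbdef, min_eq_right h.le, max_eq_left h.le]; exact h
  have hIcc : Icc a b ⊆ f '' X := by
    rcases le_total (f x) (f x₀) with h | h
    · have : a = f x ∧ b = f x₀ := ⟨min_eq_left h, max_eq_right h⟩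
      rw [this.1, this.2]
      exact hconn.Icc_subset hmem1 hmem0
    · have : a = f x₀ ∧ b = f x := ⟨min_eq_right h, max_eq_left h⟩
      rw [this.1, this.2]
      exact hconn.Icc_subset hmem0 hmem1
  have := measure_mono_null hIcc hnull
  rw [Real.volume_Icc, ENNReal.ofReal_eq_zero] at this
  linarith
end
end

section
/- Let f : ℝ³ → ℝ be differentiable and let γ : ℝ → ℝ³ be a Lipschitz curve such that for every s ∈ [0,1] the point γ(s) is a critical point of f, i.e., the Fréchet derivative of f at γ(s) is zero. Then f(γ(1)) = f(γ(0)); that is, f is constant along the curve. -/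
/-! A critical point of `f` makes `f (γ t) - f (γ s) = o(‖γ t - γ s‖)`, and the Lipschitz bound
`‖γ t - γ s‖ ≤ K |t - s|` turns this into `o(|t - s|)`. So `f ∘ γ` has derivative zero at every
`s ∈ [0, 1]`, although `γ` itself need not be differentiable anywhere, and the mean value theorem
makes it constant on `[0, 1]`. -/

open Asymptotics Filter Set Topology

theorem LipschitzWith.isBigO_sub {α E : Type*} [SeminormedAddCommGroup α]
    [SeminormedAddCommGroup E] {γ : α → E} {K : NNReal} (hγ : LipschitzWith K γ)
    (l : Filter α) (s : α) : (fun t => γ t - γ s) =O[l] fun t => t - s :=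
  isBigO_iff.2 ⟨K, Eventually.of_forall fun t => by
    simpa only [dist_eq_norm] using hγ.dist_le_mul t s⟩

theorem HasFDerivAt.hasDerivAt_zero_comp_lipschitzWith {𝕜 E F : Type*}
    [NontriviallyNormedField 𝕜] [NormedAddCommGroup E] [NormedSpace 𝕜 E]
    [NormedAddCommGroup F] [NormedSpace 𝕜 F] {f : E → F} {γ : 𝕜 → E} {K : NNReal} {s : 𝕜}
    (hf : HasFDerivAt f (0 : E →L[𝕜] F) (γ s)) (hγ : LipschitzWith K γ) :
    HasDerivAt (f ∘ γ) 0 s := by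
  rw [hasDerivAt_iff_isLittleO]
  have h := (hf.isLittleO.comp_tendsto (hγ.continuous.tendsto s)).trans_isBigO
    (hγ.isBigO_sub (𝓝 s) s)
  simpa only [Function.comp_def, zero_apply, sub_zero, smul_zero] using h

theorem eq_of_hasDerivAt_zero_on_Icc {E : Type*} [NormedAddCommGroup E] [NormedSpace ℝ E]
    {g : ℝ → E} {a b : ℝ} (hab : a ≤ b) (hg : ∀ x ∈ Icc a b, HasDerivAt g 0 x) :
    g b = g a :=
  constant_of_has_deriv_right_zero (fun x hx => (hg x hx).continuousAt.continuousWithinAt)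
    (fun x hx => (hg x (Ico_subset_Icc_self hx)).hasDerivWithinAt) b (right_mem_Icc.2 hab)

/-- A differentiable function is constant along a Lipschitz curve of critical points. -/
theorem constant_along_lipschitz_critical_curve
    (f : EuclideanSpace ℝ (Fin 3) → ℝ) (hf : Differentiable ℝ f)
    (γ : ℝ → EuclideanSpace ℝ (Fin 3)) (K : NNReal) (hγ : LipschitzWith K γ)
    (hcrit : ∀ s ∈ Set.Icc (0 : ℝ) 1, fderiv ℝ f (γ s) = 0) :
    f (γ 1) = f (γ 0) := by
  have hderiv : ∀ s ∈ Icc (0 : ℝ) 1, HasDerivAt (f ∘ γ) 0 s := fun s hs =>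
    HasFDerivAt.hasDerivAt_zero_comp_lipschitzWith (hcrit s hs ▸ (hf (γ s)).hasFDerivAt) hγ
  exact eq_of_hasDerivAt_zero_on_Icc zero_le_one hderiv
end

section
/- Let n be a natural number, let f : ℝⁿ → ℝ be differentiable at every point, and let U ⊆ ℝⁿ be a nonempty bounded open set such that f vanishes at every point of the frontier (topological boundary) of U. Then f has a critical point in U: there exists x ∈ U with df_x = 0. -/
/-- Rolle-type statement: a differentiable function vanishing on the frontier of a
nonempty bounded open set has a critical point inside the set. -/
theorem critical_point_of_vanishing_on_frontier (n : ℕ)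
    (f : EuclideanSpace ℝ (Fin n) → ℝ) (hf : Differentiable ℝ f)
    (U : Set (EuclideanSpace ℝ (Fin n))) (hUo : IsOpen U) (hUne : U.Nonempty)
    (hUb : Bornology.IsBounded U)
    (hfr : ∀ x ∈ frontier U, f x = 0) :
    ∃ x ∈ U, fderiv ℝ f x = 0 := by
  obtain ⟨x₀, hx₀⟩ := hUne
  have hK : IsCompact (closure U) := Metric.isCompact_of_isClosed_isBounded isClosed_closure hUb.closure
  have hKne : (closure U).Nonempty := ⟨x₀, subset_closure hx₀⟩
  have hc : ContinuousOn f (closure U) := hf.continuous.continuousOn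
  obtain ⟨a, haK, ha⟩ := hK.exists_isMaxOn hKne hc
  obtain ⟨b, hbK, hb⟩ := hK.exists_isMinOn hKne hc
  have hclU : closure U ⊆ U ∪ frontier U := by
    intro y hy
    rcases Classical.em (y ∈ U) with h | h
    · exact Or.inl h
    · exact Or.inr ⟨hy, fun hi => h (interior_subset hi)⟩
  by_cases hM : 0 < f a
  · have haU : a ∈ U := by
      rcases hclU haK with h | h
      · exact h
      · exact absurd (hfr a h) (ne_of_gt hM)
    refine ⟨a, haU, ?_⟩
    exact ((ha.on_subset subset_closure).isLocalMax (hUo.mem_nhds haU)).fderiv_eq_zero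
  by_cases hm : f b < 0
  · have hbU : b ∈ U := by
      rcases hclU hbK with h | h
      · exact h
      · exact absurd (hfr b h) (ne_of_lt hm)
    refine ⟨b, hbU, ?_⟩
    exact ((hb.on_subset subset_closure).isLocalMin (hUo.mem_nhds hbU)).fderiv_eq_zero
  · -- f is identically 0 on closure U
    push_neg at hM hm
    refine ⟨x₀, hx₀, ?_⟩
    have hmax : IsMaxOn f U x₀ := by
      intro y hy
      have h1 : f y ≤ f a := ha (subset_closure hy)
      have h2 : f b ≤ f x₀ := hb (subset_closure hx₀)
      simp only [Set.mem_setOf_eq]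
      linarith
    exact (hmax.isLocalMax (hUo.mem_nhds hx₀)).fderiv_eq_zero
end

section
/- Let n be a natural number, let F : ℝⁿ → ℝ be a smooth (C^∞) function, and let t < T be real numbers such that the preimage F⁻¹([t,T]) is compact and contains no critical point of F (i.e., dF_x ≠ 0 for every x with t ≤ F(x) ≤ T). Then the inclusion of the superlevel set {x | F(x) ≥ T} into the superlevel set {x | F(x) ≥ t} is a homotopy equivalence: there exists a continuous map g : {x | F(x) ≥ t} → {x | F(x) ≥ T} such that g composed with the inclusion is homotopic to the identity of {x | F(x) ≥ T}, and the inclusion composed with g is homotopic to the identity of {x | F(x) ≥ t}. -/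
open Set Metric Real
open scoped RealInnerProductSpace Topology NNReal Manifold ContDiff

/-- Core construction: a continuous "gradient-like flow" `φ` such that `φ (0, x) = x`,
`F` is nondecreasing along the flow, and the time-`(T - t)` map pushes `{t ≤ F}` into
`{T ≤ F}`. -/
theorem babyMorse_flow {E : Type*} [NormedAddCommGroup E] [InnerProductSpace ℝ E]
    [FiniteDimensional ℝ E]
    (F : E → ℝ) (hF : ContDiff ℝ (⊤ : ℕ∞) F)
    (t T : ℝ) (htT : t < T)
    (hcpt : IsCompact (F ⁻¹' Set.Icc t T))
    (hreg : ∀ x, F x ∈ Set.Icc t T → fderiv ℝ F x ≠ 0) :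
    ∃ φ : ℝ × E → E, Continuous φ ∧ (∀ x, φ (0, x) = x) ∧
      (∀ x s s', s ≤ s' → F (φ (s, x)) ≤ F (φ (s', x))) ∧
      (∀ x, t ≤ F x → T ≤ F (φ (T - t, x))) := by
  classical
  set S : ℝ := T - t with hSdef
  have hS0 : 0 < S := sub_pos.mpr htT
  -- the gradient of F, via the Riesz isomorphism
  let A : StrongDual ℝ E →L[ℝ] E :=
    { toFun := fun ℓ => (InnerProductSpace.toDual ℝ E).symm ℓ
      map_add' := fun ℓ₁ ℓ₂ => map_add _ _ _
      map_smul' := fun c ℓ => by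
        simp
      cont := (InnerProductSpace.toDual ℝ E).symm.continuous }
  set G : E → E := fun x => A (fderiv ℝ F x) with hGdef
  have hGsm : ContDiff ℝ ∞ G := A.contDiff.comp (hF.fderiv_right (by simp))
  have hGinner : ∀ x v, ⟪G x, v⟫ = fderiv ℝ F x v := fun x v =>
    InnerProductSpace.toDual_symm_apply
  set K : Set E := F ⁻¹' Set.Icc t T with hKdef
  have hKcl : IsClosed K := hcpt.isClosed
  set U : Set E := {x | G x ≠ 0} with hUdef
  have hUopen : IsOpen U := isOpen_compl_singleton.preimage hGsm.continuous
  have hKU : K ⊆ U := by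
    intro x hx h0
    refine hreg x hx ?_
    have : (InnerProductSpace.toDual ℝ E).symm (fderiv ℝ F x) = 0 := h0
    exact (InnerProductSpace.toDual ℝ E).symm.map_eq_zero_iff.mp this
  obtain ⟨K₂, hK₂cpt, hK₂int, hK₂U⟩ := exists_compact_between hcpt hUopen hKU
  -- smooth cutoff
  obtain ⟨χ, hχ0, hχ1, hχ01⟩ :=
    exists_contMDiffMap_zero_one_of_isClosed (𝓘(ℝ, E)) (n := (⊤ : ℕ∞)) (isOpen_interior.isClosed_compl)
      hKcl (Set.disjoint_left.mpr fun x hxc hxK => hxc (hK₂int hxK))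
  have hχsm : ContDiff ℝ ∞ (χ : E → ℝ) := χ.contMDiff.contDiff
  have hχzero : ∀ x, x ∉ K₂ → χ x = 0 := fun x hx =>
    hχ0 (fun hmem => hx (interior_subset hmem))
  have hχU : ∀ x, G x = 0 → χ x = 0 := by
    intro x hx
    by_contra h
    have hxK₂ : x ∈ K₂ := by
      by_contra h2
      exact h (hχzero x h2)
    exact (hK₂U hxK₂) hx
  have hχnt : ∀ x, G x = 0 → x ∉ tsupport (χ : E → ℝ) := by
    intro x hx hmem
    have hsub : tsupport (χ : E → ℝ) ⊆ K₂ :=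
      closure_minimal (fun y hy => by
        by_contra h2
        exact hy (hχzero y h2)) hK₂cpt.isClosed
    exact (hK₂U (hsub hmem)) hx
  -- the vector field
  set V : E → E := fun x => χ x • ((‖G x‖ ^ 2)⁻¹ • G x) with hVdef
  have hV0 : ∀ x, G x = 0 → V x = 0 := fun x hx => by simp [hVdef, hx]
  have hVsm : ContDiff ℝ ∞ V := by
    rw [contDiff_iff_contDiffAt]
    intro x
    by_cases hx : G x = 0
    · have hopen : (tsupport (χ : E → ℝ))ᶜ ∈ 𝓝 x :=
        (isClosed_tsupport _).isOpen_compl.mem_nhds (hχnt x hx)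
      have heq : V =ᶠ[𝓝 x] (fun _ => (0 : E)) := by
        filter_upwards [hopen] with y hy
        have : χ y = 0 := image_eq_zero_of_notMem_tsupport hy
        simp [hVdef, this]
      exact (contDiffAt_const (c := (0 : E))).congr_of_eventuallyEq heq
    · exact hχsm.contDiffAt.smul
        (((hGsm.contDiffAt.norm_sq ℝ).inv
          (pow_ne_zero 2 (norm_ne_zero_iff.mpr hx))).smul hGsm.contDiffAt)
  have hVcs : HasCompactSupport V := by
    apply HasCompactSupport.intro hK₂cpt
    intro x hx
    simp [hVdef, hχzero x hx]
  obtain ⟨C₀, hC₀⟩ := hVcs.exists_bound_of_continuous hVsm.continuous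
  set C : ℝ := max C₀ 0 with hCdef
  have hC : ∀ x, ‖V x‖ ≤ C := fun x => (hC₀ x).trans (le_max_left _ _)
  have hC0 : (0 : ℝ) ≤ C := le_max_right _ _
  obtain ⟨L₀, hL₀⟩ := (hVcs.fderiv ℝ).exists_bound_of_continuous
    ((hVsm.fderiv_right (m := ∞) le_rfl).continuous)
  set L : ℝ≥0 := ⟨max L₀ 0, le_max_right _ _⟩ with hLdef
  have hLip : LipschitzWith L V := by
    apply lipschitzWith_of_nnnorm_fderiv_le (hVsm.differentiable (by simp))
    intro x
    rw [← NNReal.coe_le_coe]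
    simp only [coe_nnnorm]
    exact (hL₀ x).trans (le_max_left _ _)
  -- key derivative identity
  have hkey : ∀ y, fderiv ℝ F y (V y) = χ y := by
    intro y
    by_cases hy : G y = 0
    · rw [hV0 y hy, map_zero, hχU y hy]
    · have h1 : fderiv ℝ F y (G y) = ‖G y‖ ^ 2 := by
        rw [← hGinner y (G y), real_inner_self_eq_norm_sq]
      have h2 : fderiv ℝ F y (V y) = χ y * ((‖G y‖ ^ 2)⁻¹ * fderiv ℝ F y (G y)) := by
        simp [hVdef, map_smul, smul_eq_mul, mul_assoc]
      rw [h2, h1, inv_mul_cancel₀ (pow_ne_zero 2 (norm_ne_zero_iff.mpr hy)), mul_one]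
  -- Picard-Lindelöf solutions on [0, S]
  have hPL : ∀ x₀ : E, IsPicardLindelof (fun _ x => V x) (tmin := 0) (tmax := S)
      ⟨0, left_mem_Icc.mpr hS0.le⟩ x₀ ⟨C * S + 1, by positivity⟩ 0 ⟨C, hC0⟩ L := by
    intro x₀
    refine IsPicardLindelof.of_time_independent (fun x _ => hC x) hLip.lipschitzOnWith ?_
    simp only [NNReal.coe_mk, NNReal.coe_zero, sub_zero, sub_self, max_eq_left hS0.le]
    show C * S ≤ C * S + 1
    linarith
  have hsolex : ∀ x₀ : E, ∃ f : ℝ → E, f 0 = x₀ ∧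
      ∀ s ∈ Icc (0 : ℝ) S, HasDerivWithinAt f (V (f s)) (Icc 0 S) s := by
    intro x₀
    obtain ⟨f, h1, h2⟩ := (hPL x₀).exists_eq_forall_mem_Icc_hasDerivWithinAt₀
    exact ⟨f, h1, h2⟩
  choose sol hsol0 hsolD using hsolex
  have hcontOn : ∀ x, ContinuousOn (sol x) (Icc 0 S) := fun x s hs =>
    (hsolD x s hs).continuousWithinAt
  have hFder : ∀ x, ∀ s ∈ Icc (0 : ℝ) S,
      HasDerivWithinAt (fun u => F (sol x u)) (χ (sol x s)) (Icc 0 S) s := by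
    intro x s hs
    have h := (hF.differentiable (by simp) (sol x s)).hasFDerivAt.comp_hasDerivWithinAt s
      (hsolD x s hs)
    rw [hkey] at h
    exact h
  have hFcont : ∀ x, ContinuousOn (fun u => F (sol x u)) (Icc 0 S) := fun x =>
    hF.continuous.comp_continuousOn (hcontOn x)
  have hmono : ∀ x, MonotoneOn (fun u => F (sol x u)) (Icc 0 S) := by
    intro x
    refine monotoneOn_of_hasDerivWithinAt_nonneg (convex_Icc 0 S) (hFcont x)
      (fun s hs => (hFder x s (interior_subset hs)).mono interior_subset)
      (fun s _ => (hχ01 _).1)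
  have hFderIci : ∀ x, ∀ s ∈ Ico (0 : ℝ) S,
      HasDerivWithinAt (fun u => F (sol x u)) (χ (sol x s)) (Ici s) s := fun x s hs =>
    (hFder x s (Ico_subset_Icc_self hs)).mono_of_mem_nhdsWithin (Icc_mem_nhdsGE_of_mem hs)
  have hsolDIci : ∀ x, ∀ s ∈ Ico (0 : ℝ) S,
      HasDerivWithinAt (sol x) (V (sol x s)) (Ici s) s := fun x s hs =>
    (hsolD x s (Ico_subset_Icc_self hs)).mono_of_mem_nhdsWithin (Icc_mem_nhdsGE_of_mem hs)
  -- growth along the flow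
  have hgrow : ∀ x, t ≤ F x → T ≤ F (sol x S) := by
    intro x hx
    by_contra hlt
    push_neg at hlt
    have hmem : ∀ s ∈ Icc (0 : ℝ) S, χ (sol x s) = 1 := by
      intro s hs
      apply hχ1
      refine ⟨?_, ?_⟩
      · have h' := hmono x (left_mem_Icc.mpr hS0.le) hs hs.1
        simp only at h'
        rw [hsol0 x] at h'
        exact hx.trans h'
      · have h' := hmono x hs (right_mem_Icc.mpr hS0.le) hs.2
        simp only at h'
        exact h'.trans hlt.le
    have hconst := constant_of_has_deriv_right_zero
      (f := fun s => F (sol x s) - s) (a := 0) (b := S)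
      ((hFcont x).sub continuousOn_id)
      (fun s hs => by
        have h := (hFderIci x s hs).sub (hasDerivWithinAt_id s (Ici s))
        rw [hmem s (Ico_subset_Icc_self hs), sub_self] at h
        exact h)
    have hc := hconst S (right_mem_Icc.mpr hS0.le)
    simp only [hsol0 x] at hc
    have : F (sol x S) = F x + S := by linarith
    rw [this] at hlt
    linarith
  -- Lipschitz in time
  have hLipS : ∀ x, ∀ s ∈ Icc (0 : ℝ) S, ∀ s' ∈ Icc (0 : ℝ) S,
      ‖sol x s' - sol x s‖ ≤ C * ‖s' - s‖ := by
    intro x s hs s' hs'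
    exact (convex_Icc (0:ℝ) S).norm_image_sub_le_of_norm_hasDerivWithin_le (hsolD x)
      (fun u _ => hC _) hs hs'
  -- Gronwall: Lipschitz in space
  have hGron : ∀ x y, ∀ s ∈ Icc (0 : ℝ) S,
      dist (sol x s) (sol y s) ≤ dist x y * exp (L * S) := by
    intro x y s hs
    have h := dist_le_of_trajectories_ODE (v := fun _ z => V z) (fun _ => hLip)
      (hcontOn x) (hsolDIci x) (hcontOn y) (hsolDIci y)
      (by rw [hsol0, hsol0]) s hs
    refine h.trans ?_
    rw [sub_zero]
    refine mul_le_mul_of_nonneg_left (exp_le_exp.mpr ?_) dist_nonneg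
    exact mul_le_mul_of_nonneg_left hs.2 L.2
  -- the flow map, with time clamped to [0, S]
  set pr : ℝ → ℝ := fun u => (projIcc (0 : ℝ) S hS0.le u : ℝ) with hprdef
  have hprmem : ∀ u, pr u ∈ Icc (0 : ℝ) S := fun u => (projIcc (0 : ℝ) S hS0.le u).2
  have hpr0 : pr 0 = 0 := by simp [hprdef]
  have hprS : pr S = S := by simp [hprdef]
  have hprmono : ∀ u u', u ≤ u' → pr u ≤ pr u' := fun u u' h =>
    monotone_projIcc hS0.le h
  have hprlip : ∀ u u', |pr u - pr u'| ≤ |u - u'| := by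
    intro u u'
    have := (LipschitzWith.projIcc (a := (0:ℝ)) (b := S) hS0.le).dist_le_mul u u'
    simpa [Subtype.dist_eq, Real.dist_eq] using this
  set φ : ℝ × E → E := fun p => sol p.2 (pr p.1) with hφdef
  have hest : ∀ p q : ℝ × E,
      dist (φ p) (φ q) ≤ (C + exp (L * S)) * dist p q := by
    intro p q
    have h1 : dist (φ p) (sol p.2 (pr q.1)) ≤ C * dist p.1 q.1 := by
      have := hLipS p.2 (pr q.1) (hprmem q.1) (pr p.1) (hprmem p.1)
      rw [dist_eq_norm]
      refine this.trans ?_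
      refine mul_le_mul_of_nonneg_left ?_ hC0
      rw [Real.norm_eq_abs, Real.dist_eq]
      exact hprlip p.1 q.1
    have h2 : dist (sol p.2 (pr q.1)) (φ q) ≤ dist p.2 q.2 * exp (L * S) :=
      hGron p.2 q.2 (pr q.1) (hprmem q.1)
    calc dist (φ p) (φ q) ≤ dist (φ p) (sol p.2 (pr q.1)) + dist (sol p.2 (pr q.1)) (φ q) :=
          dist_triangle _ _ _
      _ ≤ C * dist p.1 q.1 + dist p.2 q.2 * exp (L * S) := add_le_add h1 h2
      _ ≤ C * dist p q + dist p q * exp (L * S) := by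
          refine add_le_add (mul_le_mul_of_nonneg_left ?_ hC0)
            (mul_le_mul_of_nonneg_right ?_ (exp_nonneg _))
          · exact le_trans (le_max_left _ _) (le_of_eq (Prod.dist_eq).symm)
          · exact le_trans (le_max_right _ _) (le_of_eq (Prod.dist_eq).symm)
      _ = (C + exp (L * S)) * dist p q := by ring
  have hφcont : Continuous φ := by
    refine LipschitzWith.continuous (K := (C + exp (L * S)).toNNReal)
      (LipschitzWith.of_dist_le_mul fun p q => ?_)
    rw [Real.coe_toNNReal _ (by positivity)]
    exact hest p q
  refine ⟨φ, hφcont, ?_, ?_, ?_⟩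
  · intro x
    simp only [hφdef, hpr0]
    exact hsol0 x
  · intro x s s' hss'
    exact hmono x (hprmem s) (hprmem s') (hprmono s s' hss')
  · intro x hx
    have : φ (T - t, x) = sol x S := by
      simp only [hφdef, ← hSdef, hprS]
    rw [this]
    exact hgrow x hx

/-- Baby Morse theory (boundary-free Euclidean version): if `F⁻¹ [t,T]` is compact and
contains no critical point, then the inclusion of the superlevel set `{F ≥ T}` into
`{F ≥ t}` is a homotopy equivalence. -/
theorem superlevel_inclusion_homotopyEquiv (n : ℕ)
    (F : EuclideanSpace ℝ (Fin n) → ℝ) (hF : ContDiff ℝ (⊤ : ℕ∞) F)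
    (t T : ℝ) (htT : t < T)
    (hcpt : IsCompact (F ⁻¹' Set.Icc t T))
    (hreg : ∀ x, F x ∈ Set.Icc t T → fderiv ℝ F x ≠ 0) :
    ∃ g : C({x : EuclideanSpace ℝ (Fin n) | t ≤ F x},
            {x : EuclideanSpace ℝ (Fin n) | T ≤ F x}),
      ContinuousMap.Homotopic
        (g.comp (⟨fun x => ⟨x.1, le_trans htT.le x.2⟩,
          Continuous.subtype_mk continuous_subtype_val _⟩ :
            C({x : EuclideanSpace ℝ (Fin n) | T ≤ F x},
              {x : EuclideanSpace ℝ (Fin n) | t ≤ F x})))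
        (ContinuousMap.id _) ∧
      ContinuousMap.Homotopic
        ((⟨fun x => ⟨x.1, le_trans htT.le x.2⟩,
          Continuous.subtype_mk continuous_subtype_val _⟩ :
            C({x : EuclideanSpace ℝ (Fin n) | T ≤ F x},
              {x : EuclideanSpace ℝ (Fin n) | t ≤ F x})).comp g)
        (ContinuousMap.id _) := by
  obtain ⟨φ, hφcont, hφ0, hφmono, hφgrow⟩ := babyMorse_flow F hF t T htT hcpt hreg
  have hFx0 : ∀ x : EuclideanSpace ℝ (Fin n), ∀ s : ℝ, 0 ≤ s → F x ≤ F (φ (s, x)) := by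
    intro x s hs
    have := hφmono x 0 s hs
    rwa [hφ0 x] at this
  set g : C({x : EuclideanSpace ℝ (Fin n) | t ≤ F x},
      {x : EuclideanSpace ℝ (Fin n) | T ≤ F x}) :=
    ⟨fun x => ⟨φ (T - t, x.1), hφgrow x.1 x.2⟩,
      (hφcont.comp (continuous_const.prodMk continuous_subtype_val)).subtype_mk _⟩
    with hgdef
  refine ⟨g, ⟨ContinuousMap.Homotopy.symm ?_⟩, ⟨ContinuousMap.Homotopy.symm ?_⟩⟩
  · -- Homotopy from id to g ∘ incl on {T ≤ F}
    refine
      { toFun := fun p => ⟨φ ((p.1 : ℝ) * (T - t), p.2.1),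
          le_trans p.2.2 (hFx0 p.2.1 _ (mul_nonneg p.1.2.1 (sub_nonneg.mpr htT.le)))⟩
        continuous_toFun := ?_
        map_zero_left := ?_
        map_one_left := ?_ }
    · exact (hφcont.comp
        (((continuous_subtype_val.comp continuous_fst).mul continuous_const).prodMk
          (continuous_subtype_val.comp continuous_snd))).subtype_mk _
    · intro x
      apply Subtype.ext
      simp only [Set.Icc.coe_zero, zero_mul, hφ0]
      rfl
    · intro x
      apply Subtype.ext
      simp only [Set.Icc.coe_one, one_mul]
      rfl
  · -- Homotopy from id to incl ∘ g on {t ≤ F}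
    refine
      { toFun := fun p => ⟨φ ((p.1 : ℝ) * (T - t), p.2.1),
          le_trans p.2.2 (hFx0 p.2.1 _ (mul_nonneg p.1.2.1 (sub_nonneg.mpr htT.le)))⟩
        continuous_toFun := ?_
        map_zero_left := ?_
        map_one_left := ?_ }
    · exact (hφcont.comp
        (((continuous_subtype_val.comp continuous_fst).mul continuous_const).prodMk
          (continuous_subtype_val.comp continuous_snd))).subtype_mk _
    · intro x
      apply Subtype.ext
      simp only [Set.Icc.coe_zero, zero_mul, hφ0]
      rfl
    · intro x
      apply Subtype.ext
      simp only [Set.Icc.coe_one, one_mul]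
      rfl
end

section
/- Let n be a natural number, F : ℝⁿ → ℝ a differentiable function, t ≤ T real numbers, and V : ℝⁿ → ℝⁿ a vector field admitting a global flow φ : ℝ → ℝⁿ → ℝⁿ, meaning φ(0,x) = x for all x, φ(s+s',x) = φ(s,φ(s',x)) for all s,s',x, and for every x the curve s ↦ φ(s,x) is differentiable with derivative V(φ(s,x)) at every s. Suppose that dF_x(V(x)) = 1 for every x with t ≤ F(x) ≤ T. Then for every s ∈ [0, T − t], the image of the superlevel set {x | F(x) ≥ t} under φ(s,·) equals the superlevel set {x | F(x) ≥ t + s}. -/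
/-!
Along a flow line `u ↦ φ u x` the function `g u = F (φ u x)` has derivative `dF(V) = 1` whenever
`g u ∈ [t, T]`. Hence `g` cannot cross a level of `[t, T]` downwards, and once it enters the band
it grows with unit speed until it reaches `T`. Both inclusions follow: starting above `t` one is
above `t + s` after time `s ≤ T - t`, and starting below `t` one would reach the level `t` at some
positive time and then be strictly below `t + s` at time `s`.
-/

open Set Filter

section UnitSpeedOnBand

variable {g g' : ℝ → ℝ} {t T a b c s : ℝ}

theorem le_of_deriv_pos_at_level (hg : ∀ u, HasDerivAt g (g' u) u)
    (hpos : ∀ u, g u = c → 0 < g' u) (hab : a ≤ b) (ha : c ≤ g a) : c ≤ g b :=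
  image_le_of_deriv_right_lt_deriv_boundary (f' := fun _ => 0) continuousOn_const
    (fun _ _ => hasDerivWithinAt_const _ _ c) ha hg (fun u _ hu => hpos u hu.symm)
    ⟨hab, le_rfl⟩

theorem eq_add_sub_of_deriv_eq_one_on_band (hg : ∀ u, HasDerivAt g (g' u) u)
    (hband : ∀ u, g u ∈ Icc t T → g' u = 1) (ha : g a ∈ Icc t T)
    (hb : b ∈ Icc a (a + (T - g a))) : g b = g a + (b - a) := by
  have hcont : Continuous g := continuous_iff_continuousAt.2 fun u => (hg u).continuousAt
  have haffine : ∀ u, HasDerivAt (fun v => g a + (v - a)) 1 u := fun u => by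
    simpa using ((hasDerivAt_id u).sub_const a).const_add (g a)
  have hlower : ∀ u, a ≤ u → t ≤ g u := fun u hau =>
    le_of_deriv_pos_at_level hg
      (fun v hv => by rw [hband v ⟨hv.ge, hv.le.trans (ha.1.trans ha.2)⟩]; exact one_pos) hau ha.1
  refine IsClosed.Icc_subset_of_forall_mem_nhdsWithin (s := {u | g u = g a + (u - a)})
    ((isClosed_eq hcont (by fun_prop)).inter isClosed_Icc) (by simp) ?_ hb
  rintro x ⟨hx, hxa, hxb⟩
  -- Real induction: just right of `x`, `g` stays below `T` by continuity and above `t` by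
  -- `hlower`, so it is affine there.
  have hxT : g x < T := by linarith [show g x = g a + (x - a) from hx, hb.2]
  obtain ⟨y, hxy, hyT⟩ := exists_Ico_subset_of_mem_nhds
    ((hcont.continuousAt (x := x)).eventually_lt continuousAt_const hxT) ⟨x + 1, by linarith⟩
  have hderiv : ∀ u ∈ Ico x y, g' u = 1 := fun u hu =>
    hband u ⟨hlower u (hxa.trans hu.1), (hyT hu).le⟩
  have heq := eq_of_has_deriv_right_eq
    (fun u hu => (hderiv u hu ▸ hg u).hasDerivWithinAt) (fun u _ => (haffine u).hasDerivWithinAt)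
    hcont.continuousOn (by fun_prop) hx
  exact mem_of_superset (Ioo_mem_nhdsGT hxy) fun u hu => heq u ⟨hu.1.le, hu.2.le⟩

theorem add_le_of_deriv_eq_one_on_band (hg : ∀ u, HasDerivAt g (g' u) u)
    (hband : ∀ u, g u ∈ Icc t T → g' u = 1) (ha : t ≤ g a) (hs : s ∈ Icc 0 (T - t)) :
    t + s ≤ g (a + s) := by
  rcases le_total (g a + s) T with hbelow | habove
  · rw [eq_add_sub_of_deriv_eq_one_on_band hg hband ⟨ha, by linarith [hs.1]⟩
      ⟨by linarith [hs.1], by linarith⟩]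
    linarith
  · obtain ⟨c, hc, hTc⟩ : ∃ c ∈ Icc a (a + s), T ≤ g c := by
      rcases le_total (g a) T with haT | hTa
      · refine ⟨a + (T - g a), ⟨by linarith, by linarith⟩, ?_⟩
        rw [eq_add_sub_of_deriv_eq_one_on_band hg hband ⟨ha, haT⟩ ⟨by linarith, le_rfl⟩]
        linarith
      · exact ⟨a, ⟨le_rfl, by linarith [hs.1]⟩, hTa⟩
    have hTlevel := le_of_deriv_pos_at_level hg
      (fun u hu => by rw [hband u ⟨by linarith [hs.1, hs.2], hu.le⟩]; exact one_pos) hc.2 hTc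
    linarith [hs.2]

theorem le_of_add_le_of_deriv_eq_one_on_band (hg : ∀ u, HasDerivAt g (g' u) u)
    (hband : ∀ u, g u ∈ Icc t T → g' u = 1) (hs : s ∈ Icc 0 (T - t))
    (h : t + s ≤ g (a + s)) : t ≤ g a := by
  by_contra! hat
  have hcont : Continuous g := continuous_iff_continuousAt.2 fun u => (hg u).continuousAt
  obtain ⟨c, hc, hct⟩ := intermediate_value_Icc (by linarith [hs.1] : a ≤ a + s)
    hcont.continuousOn ⟨hat.le, by linarith [hs.1]⟩
  have hac : a < c := lt_of_le_of_ne hc.1 (by rintro rfl; linarith)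
  have hlin := eq_add_sub_of_deriv_eq_one_on_band hg hband
    ⟨hct.ge, by linarith [hs.1, hs.2]⟩ ⟨hc.2, by linarith [hs.2]⟩
  linarith

end UnitSpeedOnBand

theorem flow_maps_superlevel_sets_general (n : ℕ)
    (F : EuclideanSpace ℝ (Fin n) → ℝ) (hF : Differentiable ℝ F)
    (t T : ℝ)
    (V : EuclideanSpace ℝ (Fin n) → EuclideanSpace ℝ (Fin n))
    (φ : ℝ → EuclideanSpace ℝ (Fin n) → EuclideanSpace ℝ (Fin n))
    (hφ0 : ∀ x, φ 0 x = x)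
    (hφadd : ∀ s s' x, φ (s + s') x = φ s (φ s' x))
    (hφder : ∀ x s, HasDerivAt (fun u => φ u x) (V (φ s x)) s)
    (hV : ∀ x, F x ∈ Set.Icc t T → fderiv ℝ F x (V x) = 1) :
    ∀ s ∈ Set.Icc (0 : ℝ) (T - t),
      φ s '' {x | t ≤ F x} = {x | t + s ≤ F x} := by
  intro s hs
  have hg : ∀ x u, HasDerivAt (fun u => F (φ u x)) (fderiv ℝ F (φ u x) (V (φ u x))) u :=
    fun x u => (hF (φ u x)).hasFDerivAt.comp_hasDerivAt u (hφder x u)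
  have hband : ∀ x u, F (φ u x) ∈ Icc t T → fderiv ℝ F (φ u x) (V (φ u x)) = 1 :=
    fun x u => hV (φ u x)
  ext y
  constructor
  · rintro ⟨x, hx, rfl⟩
    simpa using add_le_of_deriv_eq_one_on_band (a := 0) (hg x) (hband x) (by simpa [hφ0]) hs
  · intro hy
    refine ⟨φ (-s) y, ?_, by rw [← hφadd, add_neg_cancel, hφ0]⟩
    exact le_of_add_le_of_deriv_eq_one_on_band (hg y) (hband y) hs (by simpa [hφ0] using hy)

/-- Flow computation in the proof of the baby Morse theory lemma: if a vector field `V`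
with global flow `φ` satisfies `dF_x(V x) = 1` on `F⁻¹ [t,T]`, then for `s ∈ [0, T-t]`
the time-`s` flow carries the superlevel set `{F ≥ t}` onto `{F ≥ t+s}`. -/
theorem flow_maps_superlevel_sets (n : ℕ)
    (F : EuclideanSpace ℝ (Fin n) → ℝ) (hF : Differentiable ℝ F)
    (t T : ℝ) (htT : t ≤ T)
    (V : EuclideanSpace ℝ (Fin n) → EuclideanSpace ℝ (Fin n))
    (φ : ℝ → EuclideanSpace ℝ (Fin n) → EuclideanSpace ℝ (Fin n))
    (hφ0 : ∀ x, φ 0 x = x)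
    (hφadd : ∀ s s' x, φ (s + s') x = φ s (φ s' x))
    (hφder : ∀ x s, HasDerivAt (fun u => φ u x) (V (φ s x)) s)
    (hV : ∀ x, F x ∈ Set.Icc t T → fderiv ℝ F x (V x) = 1) :
    ∀ s ∈ Set.Icc (0 : ℝ) (T - t),
      φ s '' {x | t ≤ F x} = {x | t + s ≤ F x} :=
  flow_maps_superlevel_sets_general n F hF t T V φ hφ0 hφadd hφder hV
end

section
/- Let K be a field, let ι be a nonempty directed preorder, let G : ι → Type be a directed system of K-vector spaces with linear transition maps f_{ij} : G i → G j for i ≤ j (satisfying the directed-system compatibility conditions), and let g be a natural number such that the dimension of G i over K is at most g for every i ∈ ι. Then the direct limit of the system (G i, f_{ij}) is a K-vector space of dimension at most g. -/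
/-- The direct limit of a directed system of vector spaces of dimension at most `g`
has dimension at most `g`. -/
theorem directLimit_rank_le (K : Type) [Field K]
    (ι : Type) [Preorder ι] [Nonempty ι] [IsDirected ι (· ≤ ·)] [DecidableEq ι]
    (G : ι → Type) [∀ i, AddCommGroup (G i)] [∀ i, Module K (G i)]
    (f : ∀ i j, i ≤ j → G i →ₗ[K] G j)
    [DirectedSystem G fun i j h => f i j h]
    (g : ℕ) (hdim : ∀ i, Module.rank K (G i) ≤ g) :
    Module.rank K (Module.DirectLimit G f) ≤ g := by
  apply rank_le
  intro s li
  choose idx y hy using fun x : s => Module.DirectLimit.exists_of (f := f) (x : _)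
  obtain ⟨j, hj⟩ := Finset.exists_le (s.attach.image idx)
  have hj' : ∀ x : s, idx x ≤ j := fun x =>
    hj _ (Finset.mem_image_of_mem idx (s.mem_attach x))
  set w : s → G j := fun x => f (idx x) j (hj' x) (y x)
  have hw : ∀ x : s, Module.DirectLimit.of K ι G f j (w x) = (x : _) := fun x => by
    simp only [w, Module.DirectLimit.of_f, hy]
  have liw : LinearIndependent K w := by
    have h : (fun x : s => (x : Module.DirectLimit G f)) =
        (Module.DirectLimit.of K ι G f j) ∘ w := by
      funext x; exact (hw x).symm
    exact LinearIndependent.of_comp _ (h ▸ li)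
  have hr := liw.cardinal_lift_le_rank
  simp only [Cardinal.lift_id] at hr
  have : (s.card : Cardinal) ≤ g :=
    calc (s.card : Cardinal) = Cardinal.mk s := by simp
      _ ≤ Module.rank K (G j) := hr
      _ ≤ g := hdim j
  exact_mod_cast this
end
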